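/- arXiv:1309.0474 — 6 statements merged into one kernel-verified Lean document; each statement's English description precedes it below -/
import Mathlib

section
/- Explicit sub- and supersolutions near the terminal time (the 'direct computation' in the proof of Corollary 3.2): let M > 0 satisfy M ≥ sup_{y∈ℝ^d} |(Lη)(y)| and set δ = min{κ₀/M, T}. Then for all (t,y) ∈ [T−δ, T)×ℝ^d: (a) the function w⁻(t,y) = e^{−θ(T−t)} (T−t)^{−1/β} (η(y) − M(T−t)) is nonnegative and satisfies w⁻_t + Lw⁻ + F(y, w⁻) ≥ 0; (b) the function w⁺(t,y) = (T−t)^{−1/β} (η(y) + (M/2)(T−t)) + (T−t)·sup_{z∈ℝ^d} λ(z) is nonnegative and satisfies w⁺_t + Lw⁺ + F(y, w⁺) ≤ 0. -/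
open scoped BigOperators NNReal

noncomputable section

/-- `ℝ^d` as Euclidean space. -/
abbrev Euc (d : ℕ) : Type := EuclideanSpace ℝ (Fin d)

/-- Partial derivative in the time variable, taken within the time set `s`. -/
noncomputable def partialT {d : ℕ} (s : Set ℝ) (w : ℝ → Euc d → ℝ) (t : ℝ) (y : Euc d) : ℝ :=
  derivWithin (fun r => w r y) s t

/-- `i`-th partial derivative in the space variable. -/
noncomputable def gradY {d : ℕ} (w : ℝ → Euc d → ℝ) (t : ℝ) (y : Euc d) (i : Fin d) : ℝ :=
  fderiv ℝ (w t) y (EuclideanSpace.single i 1)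

/-- `(i,j)` entry of the Hessian in the space variable. -/
noncomputable def hessY {d : ℕ} (w : ℝ → Euc d → ℝ) (t : ℝ) (y : Euc d) (i j : Fin d) : ℝ :=
  fderiv ℝ (fun z => fderiv ℝ (w t) z (EuclideanSpace.single j 1)) y (EuclideanSpace.single i 1)

/-- The operator `L w = ½ tr(σσᵀ D²_y w) + ⟨b, D_y w⟩`. -/
noncomputable def Lop {d n : ℕ} (b : Euc d → Euc d) (σ : Euc d → Matrix (Fin d) (Fin n) ℝ)
    (w : ℝ → Euc d → ℝ) (t : ℝ) (y : Euc d) : ℝ :=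
  (1 / 2) * ∑ i, ∑ j, (∑ k, σ y i k * σ y j k) * hessY w t y i j
    + ∑ i, b y i * gradY w t y i

/-- The nonlinearity `F(y,v) = λ(y) − v^{β+1}/(β η(y)^β) + θγ(y)v/(γ(y)^β+v^β)^{1/β} − θv`
with `β = 1/(p−1)` (so `1/β = p−1`); by Lean's conventions the third term is `0` when
`γ(y) = v = 0`. -/
noncomputable def hjbF {d : ℕ} (p θ : ℝ) (η lam gam : Euc d → ℝ) (y : Euc d) (v : ℝ) : ℝ :=
  lam y - v ^ (1 / (p - 1) + 1) / ((1 / (p - 1)) * η y ^ (1 / (p - 1)))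
    + θ * gam y * v / ((gam y ^ (1 / (p - 1)) + v ^ (1 / (p - 1))) ^ (p - 1))
    - θ * v

/-- `w` is `C^{1,2}` on `s × ℝ^d`: differentiable in time (within `s`), twice continuously
differentiable in space, with `w`, `∂_t w` and the spatial derivatives jointly continuous. -/
def IsC12On {d : ℕ} (s : Set ℝ) (w : ℝ → Euc d → ℝ) : Prop :=
  (∀ t ∈ s, ∀ y, DifferentiableWithinAt ℝ (fun r => w r y) s t) ∧
  (∀ t ∈ s, ContDiff ℝ 2 (w t)) ∧
  ContinuousOn (fun q : ℝ × Euc d => w q.1 q.2) (s ×ˢ Set.univ) ∧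
  ContinuousOn (fun q : ℝ × Euc d => partialT s w q.1 q.2) (s ×ˢ Set.univ) ∧
  ContinuousOn (fun q : ℝ × Euc d => fderiv ℝ (fun z => fderiv ℝ (w q.1) z) q.2) (s ×ˢ Set.univ)

/-- `w(t,y) → +∞` as `t → T`, locally uniformly in `y`, with `t` ranging in `[a,T)`. -/
def BlowsUpLocUnif {d : ℕ} (a T : ℝ) (w : ℝ → Euc d → ℝ) : Prop :=
  ∀ K : Set (Euc d), IsCompact K → ∀ M : ℝ,
    ∃ t₀, a ≤ t₀ ∧ t₀ < T ∧ ∀ t, t₀ ≤ t → t < T → ∀ y ∈ K, M ≤ w t y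

/-- Polynomial growth on `[a,T) × ℝ^d`: for each `s < T` a bound `C(1+‖y‖^q)` on `[a,s]`. -/
def PolyGrowthOn {d : ℕ} (a T : ℝ) (w : ℝ → Euc d → ℝ) : Prop :=
  ∀ s, a ≤ s → s < T → ∃ C > 0, ∃ q > 0,
    ∀ t, a ≤ t → t ≤ s → ∀ y : Euc d, |w t y| ≤ C * (1 + ‖y‖ ^ q)

/-- The explicit subsolution `w⁻(t,y) = e^{−θ(T−t)} (T−t)^{−1/β} (η(y) − M(T−t))`,
with `−1/β = −(p−1)`. -/
noncomputable def wMinus {d : ℕ} (T p θ M : ℝ) (η : Euc d → ℝ) (t : ℝ) (y : Euc d) : ℝ :=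
  Real.exp (-(θ * (T - t))) * (T - t) ^ (-(p - 1)) * (η y - M * (T - t))

/-- The explicit supersolution `w⁺(t,y) = (T−t)^{−1/β} (η(y) + (M/2)(T−t)) + (T−t) S`,
where `S = sup_z λ(z)`. -/
noncomputable def wPlus {d : ℕ} (T p M S : ℝ) (η : Euc d → ℝ) (t : ℝ) (y : Euc d) : ℝ :=
  (T - t) ^ (-(p - 1)) * (η y + (M / 2) * (T - t)) + (T - t) * S

/-!
Both `w⁻` and `w⁺` have the form `c(t) η(y) + k(t)`, so `L` acts on them as `c(t) Lη`, which
`±M` controls. Write `τ = T - t` and `β = 1/(p-1)`. As `w⁻ ≤ τ^{-1/β} η`, the dissipation term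
`w^{β+1}/(β η^β)` of `F` is at most `(p-1) w⁻/τ`, which together with `θ w⁻` is exactly the
growth part of `∂_t w⁻`; the restriction `τ ≤ κ₀/M` keeps `η - Mτ ≥ 0`. As
`w⁺ ≥ τ^{-1/β} (η + Mτ/2)`, Bernoulli's inequality `(1+x)^{β+1} ≥ 1 + (β+1)x` makes the
dissipation term at least `∂_t w⁺ + M τ^{-1/β} + sup λ`. The `γ`-term of `F` lies in `[0, θv]`.
-/

section RealInequalities

variable {q τ e v : ℝ}

lemma mul_div_rpow_add_rpow_le (hq : 0 < q) {γ : ℝ} (hγ : 0 ≤ γ) (hv : 0 ≤ v) :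
    γ * v / (γ ^ (1 / q) + v ^ (1 / q)) ^ q ≤ v := by
  rcases hγ.eq_or_lt with rfl | hγ
  · simpa using hv
  have hγX : γ ≤ (γ ^ (1 / q) + v ^ (1 / q)) ^ q :=
    calc γ = (γ ^ (1 / q)) ^ q := by rw [one_div, Real.rpow_inv_rpow hγ.le hq.ne']
      _ ≤ _ := by gcongr; exact le_add_of_nonneg_right (by positivity)
  calc γ * v / (γ ^ (1 / q) + v ^ (1 / q)) ^ q ≤ γ * v / γ :=
        div_le_div_of_nonneg_left (by positivity) hγ hγX
    _ = v := by field_simp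

lemma rpow_one_div_add_one_div_le (hq : 0 < q) (hτ : 0 < τ) (he : 0 < e) (hv : 0 ≤ v)
    (hve : v ≤ τ ^ (-q) * e) :
    v ^ (1 / q + 1) / (1 / q * e ^ (1 / q)) ≤ q / τ * v := by
  have hbound : v ^ (1 / q) ≤ τ⁻¹ * e ^ (1 / q) :=
    calc v ^ (1 / q) ≤ (τ ^ (-q) * e) ^ (1 / q) := by gcongr
      _ = τ⁻¹ * e ^ (1 / q) := by
        rw [Real.mul_rpow (by positivity) he.le, ← Real.rpow_mul hτ.le,
          show -q * (1 / q) = -1 by field_simp, Real.rpow_neg_one]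
  rcases hv.eq_or_lt with rfl | hv
  · rw [Real.zero_rpow (by positivity)]; simp
  rw [Real.rpow_add_one hv.ne', div_le_iff₀ (by positivity)]
  calc v ^ (1 / q) * v ≤ τ⁻¹ * e ^ (1 / q) * v := by gcongr
    _ = q / τ * v * (1 / q * e ^ (1 / q)) := by field_simp

/-- Bernoulli's inequality in homogeneous form. -/
lemma rpow_sub_one_mul_add_mul_le_rpow_add {s x : ℝ} (hs : 1 ≤ s) (he : 0 < e) (hx : 0 ≤ x) :
    e ^ (s - 1) * (e + s * x) ≤ (e + x) ^ s := by
  have hB : 1 + s * (x / e) ≤ (1 + x / e) ^ s :=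
    one_add_mul_self_le_rpow_one_add (by linarith [div_nonneg hx he.le]) hs
  calc e ^ (s - 1) * (e + s * x) = e ^ s * (1 + s * (x / e)) := by
        rw [Real.rpow_sub_one he.ne']; field_simp
    _ ≤ e ^ s * (1 + x / e) ^ s := by gcongr
    _ = (e + x) ^ s := by
        rw [← Real.mul_rpow he.le (by positivity)]; congr 1; field_simp

lemma le_rpow_one_div_add_one_div (hq : 0 < q) (hτ : 0 < τ) (he : 0 < e) {m : ℝ} (hm : 0 ≤ m)
    (hv : τ ^ (-q) * (e + m * τ) ≤ v) :
    q / τ * (τ ^ (-q) * (e + m * τ)) + τ ^ (-q) * m ≤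
      v ^ (1 / q + 1) / (1 / q * e ^ (1 / q)) := by
  set R := τ ^ (-q)
  have hR : 0 < R := by positivity
  have hRpow : R ^ (1 / q + 1) = R / τ := by
    rw [Real.rpow_add_one hR.ne', ← Real.rpow_mul hτ.le, show -q * (1 / q) = -1 by field_simp,
      Real.rpow_neg_one]
    field_simp
  have hBern := rpow_sub_one_mul_add_mul_le_rpow_add (s := 1 / q + 1) (by simp [hq.le]) he
    (mul_nonneg hm hτ.le)
  rw [add_sub_cancel_right] at hBern
  rw [le_div_iff₀ (by positivity)]
  calc (q / τ * (R * (e + m * τ)) + R * m) * (1 / q * e ^ (1 / q))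
      = R / τ * (e ^ (1 / q) * (e + (1 / q + 1) * (m * τ))) := by field_simp; ring
    _ ≤ R / τ * (e + m * τ) ^ (1 / q + 1) := by gcongr
    _ = (R * (e + m * τ)) ^ (1 / q + 1) := by
        rw [Real.mul_rpow hR.le (by positivity), hRpow]
    _ ≤ v ^ (1 / q + 1) := by gcongr

end RealInequalities

section Nonlinearity

variable {d : ℕ} {p θ v : ℝ} {η lam gam : Euc d → ℝ} {y : Euc d}

lemma neg_mul_le_hjbF {τ : ℝ} (hp : 1 < p) (hθ : 0 ≤ θ) (hlam : 0 ≤ lam y) (hgam : 0 ≤ gam y)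
    (hτ : 0 < τ) (hη : 0 < η y) (hv : 0 ≤ v) (hvη : v ≤ τ ^ (-(p - 1)) * η y) :
    -((θ + (p - 1) / τ) * v) ≤ hjbF p θ η lam gam y v := by
  have hq : 0 < p - 1 := sub_pos.2 hp
  have hdiss := rpow_one_div_add_one_div_le hq hτ hη hv hvη
  have hmix : 0 ≤ θ * gam y * v / (gam y ^ (1 / (p - 1)) + v ^ (1 / (p - 1))) ^ (p - 1) := by
    positivity
  simp only [hjbF]
  linarith

lemma hjbF_le {S : ℝ} (hp : 1 < p) (hθ : 0 ≤ θ) (hlam : lam y ≤ S) (hgam : 0 ≤ gam y)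
    (hv : 0 ≤ v) :
    hjbF p θ η lam gam y v ≤ S - v ^ (1 / (p - 1) + 1) / (1 / (p - 1) * η y ^ (1 / (p - 1))) := by
  have hmix := mul_le_mul_of_nonneg_left (mul_div_rpow_add_rpow_le (sub_pos.2 hp) hgam hv) hθ
  simp only [hjbF, mul_assoc, mul_div_assoc] at hmix ⊢
  linarith

end Nonlinearity

section Operator

variable {d n : ℕ} (b : Euc d → Euc d) (σ : Euc d → Matrix (Fin d) (Fin n) ℝ)

-- No regularity of `f` is needed: over a field, `fderiv (c • f) = c • fderiv f` everywhere.
lemma Lop_eq_const_mul {w : ℝ → Euc d → ℝ} {t c k : ℝ} {f : Euc d → ℝ}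
    (hw : w t = fun z => c * f z + k) (y : Euc d) :
    Lop b σ w t y = c * Lop b σ (fun _ => f) 0 y := by
  have hD : fderiv ℝ (w t) = c • fderiv ℝ f := by
    ext1 z
    rw [hw, fderiv_add_const]
    exact congrFun (fderiv_const_smul_field (f := f) c) z
  have hgrad : ∀ i, gradY w t y i = c * gradY (fun _ => f) 0 y i := fun i => by
    simp [gradY, hD]
  have hhess : ∀ i j, hessY w t y i j = c * hessY (fun _ => f) 0 y i j := fun i j => by
    have : (fun z => fderiv ℝ (w t) z (EuclideanSpace.single j 1))
        = c • fun z => fderiv ℝ f z (EuclideanSpace.single j 1) := by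
      ext z; simp [hD]
    simp [hessY, this, fderiv_const_smul_field]
  simp only [Lop, hgrad, hhess, mul_left_comm _ c, ← Finset.mul_sum]
  ring

end Operator

section TimeDerivative

variable {d : ℕ} {T t : ℝ}

lemma hasDerivAt_sub_rpow_neg (ht : t < T) (a : ℝ) :
    HasDerivAt (fun r => (T - r) ^ (-a)) (a / (T - t) * (T - t) ^ (-a)) t := by
  have hτ : T - t ≠ 0 := (sub_pos.2 ht).ne'
  convert ((hasDerivAt_id' t).const_sub T).rpow_const (p := -a) (Or.inl hτ) using 1
  rw [Real.rpow_sub_one hτ]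
  ring

lemma partialT_Ico_eq {a w' : ℝ} {w : ℝ → Euc d → ℝ} {y : Euc d} (ht : t ∈ Set.Ico a T)
    (hw : HasDerivAt (fun r => w r y) w' t) :
    partialT (Set.Ico a T) w t y = w' :=
  hw.hasDerivWithinAt.derivWithin (uniqueDiffOn_Ico a T t ht)

variable (p θ M S : ℝ) (η : Euc d → ℝ) (y : Euc d)

lemma hasDerivAt_wMinus (ht : t < T) :
    HasDerivAt (fun r => wMinus T p θ M η r y)
      ((θ + (p - 1) / (T - t)) * wMinus T p θ M η t y
        + Real.exp (-(θ * (T - t))) * (T - t) ^ (-(p - 1)) * M) t := by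
  have hexp : HasDerivAt (fun r => Real.exp (-(θ * (T - r))))
      (θ * Real.exp (-(θ * (T - t)))) t := by
    simpa [mul_comm] using (((hasDerivAt_id t).const_sub T).const_mul θ).neg.exp
  have hlin : HasDerivAt (fun r => η y - M * (T - r)) M t := by
    simpa using (((hasDerivAt_id t).const_sub T).const_mul M).const_sub (η y)
  unfold wMinus
  exact ((hexp.mul (hasDerivAt_sub_rpow_neg ht (p - 1))).mul hlin).congr_deriv
    (by simp only [Pi.mul_apply]; ring)

lemma hasDerivAt_wPlus (ht : t < T) :
    HasDerivAt (fun r => wPlus T p M S η r y)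
      ((p - 1) / (T - t) * (T - t) ^ (-(p - 1)) * (η y + M / 2 * (T - t))
        - (T - t) ^ (-(p - 1)) * (M / 2) - S) t := by
  have hlin : HasDerivAt (fun r => η y + M / 2 * (T - r)) (-(M / 2)) t := by
    simpa using (((hasDerivAt_id t).const_sub T).const_mul (M / 2)).const_add (η y)
  have hS : HasDerivAt (fun r => (T - r) * S) (-S) t := by
    simpa using ((hasDerivAt_id t).const_sub T).mul_const S
  unfold wPlus
  exact (((hasDerivAt_sub_rpow_neg ht (p - 1)).mul hlin).add hS).congr_deriv (by ring)

end TimeDerivative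

section Solutions

variable {d n : ℕ} (b : Euc d → Euc d) (σ : Euc d → Matrix (Fin d) (Fin n) ℝ)
  {a T p θ M S t : ℝ} {η lam gam : Euc d → ℝ} {y : Euc d}

lemma wMinus_nonneg (ht : t < T) (hMη : M * (T - t) ≤ η y) : 0 ≤ wMinus T p θ M η t y := by
  have hτ : 0 < T - t := sub_pos.2 ht
  unfold wMinus
  exact mul_nonneg (by positivity) (sub_nonneg.2 hMη)

lemma wMinus_le (hθ : 0 ≤ θ) (hM : 0 ≤ M) (ht : t < T) (hMη : M * (T - t) ≤ η y) :
    wMinus T p θ M η t y ≤ (T - t) ^ (-(p - 1)) * η y := by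
  have hτ : 0 < T - t := sub_pos.2 ht
  have hexp : Real.exp (-(θ * (T - t))) ≤ 1 := Real.exp_le_one_iff.2 (by nlinarith)
  unfold wMinus
  calc Real.exp (-(θ * (T - t))) * (T - t) ^ (-(p - 1)) * (η y - M * (T - t))
      ≤ 1 * (T - t) ^ (-(p - 1)) * (η y - M * (T - t)) := by gcongr
    _ ≤ (T - t) ^ (-(p - 1)) * η y := by
        rw [one_mul]; gcongr; nlinarith

lemma wPlus_nonneg (hM : 0 ≤ M) (hS : 0 ≤ S) (ht : t < T) (hη : 0 ≤ η y) :
    0 ≤ wPlus T p M S η t y := by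
  have hτ : 0 < T - t := sub_pos.2 ht
  unfold wPlus
  positivity

theorem wMinus_subsolution (hp : 1 < p) (hθ : 0 ≤ θ) (hM : 0 ≤ M) (ht : t ∈ Set.Ico a T)
    (hη : 0 < η y) (hMη : M * (T - t) ≤ η y) (hLη : -M ≤ Lop b σ (fun _ => η) 0 y)
    (hlam : 0 ≤ lam y) (hgam : 0 ≤ gam y) :
    0 ≤ partialT (Set.Ico a T) (wMinus T p θ M η) t y + Lop b σ (wMinus T p θ M η) t y
      + hjbF p θ η lam gam y (wMinus T p θ M η t y) := by
  have hτ : 0 < T - t := sub_pos.2 ht.2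
  set c := Real.exp (-(θ * (T - t))) * (T - t) ^ (-(p - 1))
  have hc : 0 ≤ c := by positivity
  have hw : wMinus T p θ M η t = fun z => c * η z + -(c * M * (T - t)) := by
    ext z; simp only [wMinus, c]; ring
  have hF := neg_mul_le_hjbF hp hθ hlam hgam hτ hη (wMinus_nonneg ht.2 hMη)
    (wMinus_le hθ hM ht.2 hMη)
  have hLc : 0 ≤ c * (M + Lop b σ (fun _ => η) 0 y) := mul_nonneg hc (by linarith)
  rw [partialT_Ico_eq ht (hasDerivAt_wMinus p θ M η y ht.2), Lop_eq_const_mul b σ hw]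
  linarith

theorem wPlus_supersolution (hp : 1 < p) (hθ : 0 ≤ θ) (hM : 0 ≤ M) (hS : 0 ≤ S)
    (ht : t ∈ Set.Ico a T) (hη : 0 < η y) (hLη : Lop b σ (fun _ => η) 0 y ≤ M)
    (hlam : lam y ≤ S) (hgam : 0 ≤ gam y) :
    partialT (Set.Ico a T) (wPlus T p M S η) t y + Lop b σ (wPlus T p M S η) t y
      + hjbF p θ η lam gam y (wPlus T p M S η t y) ≤ 0 := by
  have hτ : 0 < T - t := sub_pos.2 ht.2
  set R := (T - t) ^ (-(p - 1))
  have hR : 0 ≤ R := by positivity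
  have hw : wPlus T p M S η t = fun z => R * η z + (R * (M / 2 * (T - t)) + (T - t) * S) := by
    ext z; simp only [wPlus, R]; ring
  have hF := hjbF_le (η := η) hp hθ hlam hgam (wPlus_nonneg (p := p) hM hS ht.2 hη.le)
  have hdiss := le_rpow_one_div_add_one_div (sub_pos.2 hp) hτ hη (by positivity : 0 ≤ M / 2)
    (v := wPlus T p M S η t y) (by unfold wPlus; nlinarith)
  have hLR : R * Lop b σ (fun _ => η) 0 y ≤ R * M := mul_le_mul_of_nonneg_left hLη hR
  rw [partialT_Ico_eq ht (hasDerivAt_wPlus p M S η y ht.2), Lop_eq_const_mul b σ hw]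
  linarith

end Solutions

theorem explicit_sub_and_supersolutions_general
    (d n : ℕ)
    (T p θ κ₀ : ℝ) (hp : 1 < p) (hθ : 0 ≤ θ)
    (b : Euc d → Euc d) (σ : Euc d → Matrix (Fin d) (Fin n) ℝ)
    (η lam gam : Euc d → ℝ)
    (hηκ : ∀ y, κ₀ ≤ η y)
    (hlam0 : ∀ y, 0 ≤ lam y) (hlamBdd : ∃ C, ∀ y, lam y ≤ C)
    (hgam0 : ∀ y, 0 ≤ gam y)
    (M : ℝ) (hM : 0 < M)
    (hMge : ∀ y, |Lop b σ (fun _ => η) 0 y| ≤ M) :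
    (∀ t, T - min (κ₀ / M) T ≤ t → t < T → ∀ y,
      0 ≤ wMinus T p θ M η t y) ∧
    (∀ t, T - min (κ₀ / M) T ≤ t → t < T → ∀ y,
      0 ≤ partialT (Set.Ico (T - min (κ₀ / M) T) T) (wMinus T p θ M η) t y
        + Lop b σ (wMinus T p θ M η) t y
        + hjbF p θ η lam gam y (wMinus T p θ M η t y)) ∧
    (∀ t, T - min (κ₀ / M) T ≤ t → t < T → ∀ y,
      0 ≤ wPlus T p M (⨆ z, lam z) η t y) ∧
    (∀ t, T - min (κ₀ / M) T ≤ t → t < T → ∀ y,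
      partialT (Set.Ico (T - min (κ₀ / M) T) T) (wPlus T p M (⨆ z, lam z) η) t y
        + Lop b σ (wPlus T p M (⨆ z, lam z) η) t y
        + hjbF p θ η lam gam y (wPlus T p M (⨆ z, lam z) η t y) ≤ 0) := by
  obtain ⟨C, hC⟩ := hlamBdd
  have hlamS : ∀ y, lam y ≤ ⨆ z, lam z := le_ciSup ⟨C, Set.forall_mem_range.2 hC⟩
  have hS : 0 ≤ ⨆ z, lam z := (hlam0 0).trans (hlamS 0)
  have hMη : ∀ t, T - min (κ₀ / M) T ≤ t → ∀ y, M * (T - t) ≤ η y := fun t ht y =>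
    calc M * (T - t) ≤ M * (κ₀ / M) := by gcongr; linarith [min_le_left (κ₀ / M) T]
      _ = κ₀ := mul_div_cancel₀ κ₀ hM.ne'
      _ ≤ η y := hηκ y
  have hη : ∀ t, T - min (κ₀ / M) T ≤ t → t < T → ∀ y, 0 < η y := fun t ht₁ ht₂ y =>
    (mul_pos hM (sub_pos.2 ht₂)).trans_le (hMη t ht₁ y)
  refine ⟨fun t ht₁ ht₂ y => wMinus_nonneg ht₂ (hMη t ht₁ y), fun t ht₁ ht₂ y => ?_,
    fun t ht₁ ht₂ y => wPlus_nonneg hM.le hS ht₂ (hη t ht₁ ht₂ y).le, fun t ht₁ ht₂ y => ?_⟩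
  · exact wMinus_subsolution b σ hp hθ hM.le ⟨ht₁, ht₂⟩ (hη t ht₁ ht₂ y) (hMη t ht₁ y)
      (abs_le.1 (hMge y)).1 (hlam0 y) (hgam0 y)
  · exact wPlus_supersolution b σ hp hθ hM.le hS ⟨ht₁, ht₂⟩ (hη t ht₁ ht₂ y)
      (abs_le.1 (hMge y)).2 (hlamS y) (hgam0 y)

/-- the 'direct computation' in the proof of Corollary 3.2: with
`M ≥ sup_y |(Lη)(y)|` and `δ = min{κ₀/M, T}`, on `[T−δ,T) × ℝ^d` the function `w⁻` is a
nonnegative subsolution and `w⁺` is a nonnegative supersolution of the HJB PDE. -/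
theorem explicit_sub_and_supersolutions
    (d n : ℕ) (hd : 1 ≤ d) (hn : 1 ≤ n)
    (T p θ κ₀ : ℝ) (hT : 0 < T) (hp : 1 < p) (hθ : 0 ≤ θ) (hκ₀ : 0 < κ₀)
    (b : Euc d → Euc d) (σ : Euc d → Matrix (Fin d) (Fin n) ℝ)
    (hbLip : ∃ K : ℝ≥0, LipschitzWith K b) (hbBdd : ∃ C, ∀ y, ‖b y‖ ≤ C)
    (hσLip : ∃ K, ∀ y y' : Euc d, ∀ i k, |σ y i k - σ y' i k| ≤ K * ‖y - y'‖)
    (hσBdd : ∃ C, ∀ y i k, |σ y i k| ≤ C)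
    (hell : ∃ ν > 0, ∀ (y : Euc d) (z : Fin d → ℝ),
      ν * ∑ i, z i ^ 2 ≤ ∑ i, ∑ j, (∑ k, σ y i k * σ y j k) * z j * z i)
    (η lam gam : Euc d → ℝ)
    (hηC2 : ContDiff ℝ 2 η)
    (hηBdd : ∃ C, ∀ y, |η y| ≤ C ∧ ‖fderiv ℝ η y‖ ≤ C ∧ ‖fderiv ℝ (fderiv ℝ η) y‖ ≤ C)
    (hηκ : ∀ y, κ₀ ≤ η y)
    (hlamCont : Continuous lam) (hlam0 : ∀ y, 0 ≤ lam y) (hlamBdd : ∃ C, ∀ y, lam y ≤ C)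
    (hgamCont : Continuous gam) (hgam0 : ∀ y, 0 ≤ gam y) (hgamBdd : ∃ C, ∀ y, gam y ≤ C)
    (M : ℝ) (hM : 0 < M)
    (hMge : ∀ y, |Lop b σ (fun _ => η) 0 y| ≤ M) :
    (∀ t, T - min (κ₀ / M) T ≤ t → t < T → ∀ y,
      0 ≤ wMinus T p θ M η t y) ∧
    (∀ t, T - min (κ₀ / M) T ≤ t → t < T → ∀ y,
      0 ≤ partialT (Set.Ico (T - min (κ₀ / M) T) T) (wMinus T p θ M η) t y
        + Lop b σ (wMinus T p θ M η) t y
        + hjbF p θ η lam gam y (wMinus T p θ M η t y)) ∧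
    (∀ t, T - min (κ₀ / M) T ≤ t → t < T → ∀ y,
      0 ≤ wPlus T p M (⨆ z, lam z) η t y) ∧
    (∀ t, T - min (κ₀ / M) T ≤ t → t < T → ∀ y,
      partialT (Set.Ico (T - min (κ₀ / M) T) T) (wPlus T p M (⨆ z, lam z) η) t y
        + Lop b σ (wPlus T p M (⨆ z, lam z) η) t y
        + hjbF p θ η lam gam y (wPlus T p M (⨆ z, lam z) η t y) ≤ 0) :=
  explicit_sub_and_supersolutions_general d n T p θ κ₀ hp hθ b σ η lam gam hηκ hlam0 hlamBdd hgam0 M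
    hM hMge
end
end

section
/- HJB verification identity (Lemma 2.4): suppose v : [0,T)×ℝ^d → [0,∞) is C^{1,2} and satisfies v_t + Lv + F(y,v) = 0 on [0,T)×ℝ^d, and define V(t,y,x) = v(t,y)|x|^p. Then for every (t,y,x) ∈ [0,T)×ℝ^d×ℝ one has V_t(t,y,x) + (LV)(t,y,x) + inf_{(ξ,π)∈ℝ²} { −ξ·V_x(t,y,x) + θ(V(t,y,x−π) − V(t,y,x)) + η(y)|ξ|^p + θ γ(y)|π|^p + λ(y)|x|^p } = 0, where L acts in the y-variables and V_x is the partial derivative in x. Moreover the infimum is attained in the ξ-variable at ξ* = (v(t,y)/η(y))^β x, and, whenever γ(y)^β + v(t,y)^β > 0, in the π-variable at π* = v(t,y)^β/(γ(y)^β + v(t,y)^β)·x. -/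
/-! Write `a = v(t,y)`. Since `L` and `∂_t` act only in `(t,y)`, `V_t + LV = (v_t + Lv)|x|^p`, so
it suffices to show that the infimum equals `F(y,a)|x|^p`. The infimum splits into a `ξ`-part
`-ξ V_x + η|ξ|^p` and a `π`-part `a|x-π|^p + γ|π|^p`. Both are convex, so by the tangent-line
inequality `u^p + p u^(p-1)(s-u) ≤ s^p` each is minimised where the marginal costs balance
(`p η |ξ|^(p-1) = |V_x|`, resp. `a |x-π|^(p-1) = γ |π|^(p-1)`), i.e. at `ξ*` and `π*`; the two
minimal values are exactly the `η`- and `γ`-terms of `F`. -/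

open scoped BigOperators NNReal

noncomputable section

/-- The expression inside the infimum of the HJB equation, evaluated at controls `(ξ, q)`:
`−ξ V_x(t,y,x) + θ(V(t,y,x−q) − V(t,y,x)) + η(y)|ξ|^p + θγ(y)|q|^p + λ(y)|x|^p`,
where `V(t,y,x) = v(t,y)|x|^p`. -/
noncomputable def hjbInner {d : ℕ} (p θ : ℝ) (η lam gam : Euc d → ℝ)
    (v : ℝ → Euc d → ℝ) (t : ℝ) (y : Euc d) (x ξ q : ℝ) : ℝ :=
  -ξ * deriv (fun z : ℝ => v t y * |z| ^ p) x
    + θ * (v t y * |x - q| ^ p - v t y * |x| ^ p)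
    + η y * |ξ| ^ p + θ * gam y * |q| ^ p + lam y * |x| ^ p

section Scalar

variable {p : ℝ}

theorem rpow_tangent_le (hp : 1 ≤ p) {s u : ℝ} (hs : 0 ≤ s) (hu : 0 ≤ u) :
    u ^ p + p * u ^ (p - 1) * (s - u) ≤ s ^ p := by
  rcases hu.eq_or_lt with rfl | hu
  · rcases hp.eq_or_lt with rfl | hp
    · simp
    · simp [Real.zero_rpow (by linarith : p ≠ 0), Real.zero_rpow (by linarith : p - 1 ≠ 0),
        Real.rpow_nonneg hs]
  · have hbern := one_add_mul_self_le_rpow_one_add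
      (by linarith [div_nonneg hs hu.le] : -1 ≤ s / u - 1) hp
    rw [add_sub_cancel, Real.div_rpow hs hu.le, le_div_iff₀ (by positivity)] at hbern
    have hpow : u ^ p = u ^ (p - 1) * u := by
      rw [← Real.rpow_add_one' hu.le (by linarith), sub_add_cancel]
    calc u ^ p + p * u ^ (p - 1) * (s - u) = (1 + p * (s / u - 1)) * u ^ p := by
          rw [hpow]; field_simp
      _ ≤ s ^ p := hbern

theorem mul_rpow_add_mul_rpow_le (hp : 1 ≤ p) {a g A B s t : ℝ} (ha : 0 ≤ a) (hg : 0 ≤ g)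
    (hA : 0 ≤ A) (hB : 0 ≤ B) (hs : 0 ≤ s) (ht : 0 ≤ t)
    (hslope : a * A ^ (p - 1) = g * B ^ (p - 1)) (hst : A + B ≤ s + t) :
    a * A ^ p + g * B ^ p ≤ a * s ^ p + g * t ^ p := by
  have hμ : 0 ≤ p * (a * A ^ (p - 1)) := by
    have := Real.rpow_nonneg hA (p - 1); positivity
  have h₁ := mul_le_mul_of_nonneg_left (rpow_tangent_le hp hs hA) ha
  have h₂ := mul_le_mul_of_nonneg_left (rpow_tangent_le hp ht hB) hg
  have hmarg : a * (p * A ^ (p - 1) * (s - A)) + g * (p * B ^ (p - 1) * (t - B))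
      = p * (a * A ^ (p - 1)) * (s + t - (A + B)) := by
    linear_combination (-(p * (t - B))) * hslope
  linear_combination h₁ + h₂ + mul_nonneg hμ (sub_nonneg.2 hst) - hmarg

theorem rpow_sub_one_mul_self (hp : p ≠ 0) {x : ℝ} (hx : 0 ≤ x) : x ^ (p - 1) * x = x ^ p := by
  rw [← Real.rpow_add_one' hx (by simpa using hp), sub_add_cancel]

theorem abs_rpow_sub_two_mul_self_mul_self (hp : p ≠ 0) (hp₁ : p ≠ 1) (x : ℝ) :
    |x| ^ (p - 2) * x * x = |x| ^ p := by
  rw [mul_assoc, ← abs_mul_abs_self, ← mul_assoc,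
    ← Real.rpow_add_one' (abs_nonneg x) (by contrapose! hp₁; linarith),
    show p - 2 + 1 = p - 1 by ring, rpow_sub_one_mul_self hp (abs_nonneg x)]

variable {β : ℝ}

theorem rpow_rpow_of_mul_eq_one {x r : ℝ} (hx : 0 ≤ x) (h : β * r = 1) : (x ^ β) ^ r = x := by
  rw [← Real.rpow_mul hx, h, Real.rpow_one]

theorem eq_zero_and_eq_zero_of_rpow_add_rpow_eq_zero (hβ : β ≠ 0) {a g : ℝ} (ha : 0 ≤ a)
    (hg : 0 ≤ g) (h : g ^ β + a ^ β = 0) : g = 0 ∧ a = 0 := by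
  rw [add_eq_zero_iff_of_nonneg (Real.rpow_nonneg hg β) (Real.rpow_nonneg ha β),
    Real.rpow_eq_zero hg hβ, Real.rpow_eq_zero ha hβ] at h
  exact h

/-- With `a = v(t,y)`, `e = η(y)`, `g = γ(y)` these are the `ξ`- and `π`-dependent parts of
`hjbInner`; `a * (p * |x| ^ (p - 2) * x)` is `V_x`. -/
noncomputable def hjbXiPart (p e a x ξ : ℝ) : ℝ := -ξ * (a * (p * |x| ^ (p - 2) * x)) + e * |ξ| ^ p

noncomputable def hjbPiPart (p a g x q : ℝ) : ℝ := a * |x - q| ^ p + g * |q| ^ p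

theorem hjbXiPart_mul_self (hp : 1 < p) {e a c : ℝ} (hc : 0 ≤ c) (x : ℝ) :
    hjbXiPart p e a x (c * x) = (e * c ^ p - a * p * c) * |x| ^ p := by
  rw [hjbXiPart, abs_mul, abs_of_nonneg hc, Real.mul_rpow hc (abs_nonneg x)]
  linear_combination (-(a * p * c)) *
    abs_rpow_sub_two_mul_self_mul_self (p := p) (by linarith) (by linarith) x

theorem hjbXiPart_opt_le (hp : 1 < p) (hβ : β * (p - 1) = 1) {e a : ℝ} (he : 0 < e)
    (ha : 0 ≤ a) (x ξ : ℝ) : hjbXiPart p e a x ((a / e) ^ β * x) ≤ hjbXiPart p e a x ξ := by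
  set c := (a / e) ^ β
  have hc : 0 ≤ c := Real.rpow_nonneg (div_nonneg ha he.le) β
  set u := c * |x|
  set m := a * p * |x| ^ (p - 1)
  -- `|V_x| = m` is the marginal cost `e p u^(p-1)` at `u = |ξ*|`
  have hmarg : e * (p * u ^ (p - 1)) = m := by
    rw [Real.mul_rpow hc (abs_nonneg x), rpow_rpow_of_mul_eq_one (div_nonneg ha he.le) hβ]
    field_simp
    simp only [m]
    ring
  have hopt : hjbXiPart p e a x (c * x) = e * u ^ p - m * u := by
    rw [hjbXiPart_mul_self hp hc, Real.mul_rpow hc (abs_nonneg x), ←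
      rpow_sub_one_mul_self (p := p) (by linarith) (abs_nonneg x)]
    ring
  have hD : |a * (p * |x| ^ (p - 2) * x)| = m := by
    rw [abs_mul, abs_mul, abs_mul, abs_of_nonneg ha, abs_of_pos (by linarith : 0 < p),
      abs_of_nonneg (Real.rpow_nonneg (abs_nonneg x) _), mul_assoc p,
      ← Real.rpow_add_one' (abs_nonneg x) (by linarith), show p - 2 + 1 = p - 1 by ring]
    ring
  have hpair : -|ξ| * m ≤ -ξ * (a * (p * |x| ^ (p - 2) * x)) := by
    rw [← hD, neg_mul, neg_mul, neg_le_neg_iff, ← abs_mul]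
    exact le_abs_self _
  have htan := mul_le_mul_of_nonneg_left
    (rpow_tangent_le hp.le (abs_nonneg ξ) (mul_nonneg hc (abs_nonneg x))) he.le
  rw [hopt, hjbXiPart]
  linear_combination htan + hpair + (u - |ξ|) * hmarg

theorem hjbXiPart_opt_eq (hp : 1 < p) (hβ : β * (p - 1) = 1) {e a : ℝ} (he : 0 < e)
    (ha : 0 ≤ a) (x : ℝ) :
    hjbXiPart p e a x ((a / e) ^ β * x) = -(a ^ (β + 1) / (β * e ^ β)) * |x| ^ p := by
  have hβ0 : 0 < β := by nlinarith
  set c := (a / e) ^ β with hc_def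
  have hc : 0 ≤ c := Real.rpow_nonneg (div_nonneg ha he.le) β
  have hcp : c ^ p = a / e * c := by
    rw [← rpow_sub_one_mul_self (by linarith) hc, hc_def,
      rpow_rpow_of_mul_eq_one (div_nonneg ha he.le) hβ]
  have hval : a ^ (β + 1) / (β * e ^ β) = (p - 1) * a * c := by
    rw [Real.rpow_add_one' ha (by linarith), hc_def, Real.div_rpow ha he.le]
    field_simp
    linear_combination (-(a ^ β * a)) * hβ
  rw [hjbXiPart_mul_self hp hc, hcp, hval]
  field_simp
  ring

theorem hjbPiPart_opt_of_pos {a g : ℝ} (ha : 0 ≤ a) (hg : 0 ≤ g) (hS : 0 < g ^ β + a ^ β)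
    (x : ℝ) : hjbPiPart p a g x (a ^ β / (g ^ β + a ^ β) * x)
      = a * (g ^ β / (g ^ β + a ^ β) * |x|) ^ p + g * (a ^ β / (g ^ β + a ^ β) * |x|) ^ p := by
  have hsub : x - a ^ β / (g ^ β + a ^ β) * x = g ^ β / (g ^ β + a ^ β) * x := by
    field_simp; ring
  rw [hjbPiPart, hsub, abs_mul, abs_mul,
    abs_of_nonneg (by positivity : 0 ≤ g ^ β / (g ^ β + a ^ β)), abs_of_nonneg (by positivity : 0 ≤ a ^ β / (g ^ β + a ^ β))]

theorem hjbPiPart_opt_le (hp : 1 < p) (hβ : β * (p - 1) = 1) {a g : ℝ} (ha : 0 ≤ a)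
    (hg : 0 ≤ g) (x q : ℝ) :
    hjbPiPart p a g x (a ^ β / (g ^ β + a ^ β) * x) ≤ hjbPiPart p a g x q := by
  have hβ0 : β ≠ 0 := by rintro rfl; simp at hβ
  rcases (add_nonneg (Real.rpow_nonneg hg β) (Real.rpow_nonneg ha β)).eq_or_lt with hS | hS
  · obtain ⟨rfl, rfl⟩ := eq_zero_and_eq_zero_of_rpow_add_rpow_eq_zero hβ0 ha hg hS.symm
    simp [hjbPiPart]
  rw [hjbPiPart_opt_of_pos ha hg hS, hjbPiPart]
  -- both marginal costs equal `a g |x|^(p-1) / S^(p-1)`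
  have hslope : a * (g ^ β / (g ^ β + a ^ β) * |x|) ^ (p - 1)
      = g * (a ^ β / (g ^ β + a ^ β) * |x|) ^ (p - 1) := by
    rw [Real.mul_rpow (by positivity) (abs_nonneg x), Real.mul_rpow (by positivity) (abs_nonneg x),
      Real.div_rpow (by positivity) hS.le, Real.div_rpow (by positivity) hS.le,
      rpow_rpow_of_mul_eq_one hg hβ, rpow_rpow_of_mul_eq_one ha hβ]
    ring
  have hsum : g ^ β / (g ^ β + a ^ β) * |x| + a ^ β / (g ^ β + a ^ β) * |x| ≤ |x - q| + |q| := by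
    have hx : g ^ β / (g ^ β + a ^ β) * |x| + a ^ β / (g ^ β + a ^ β) * |x| = |x| := by
      field_simp
    linarith [hx, abs_sub_abs_le_abs_sub x q]
  exact mul_rpow_add_mul_rpow_le hp.le ha hg (by positivity) (by positivity) (abs_nonneg _)
    (abs_nonneg _) hslope hsum

theorem hjbPiPart_opt_eq (hp : 1 < p) (hβ : β * (p - 1) = 1) {a g : ℝ} (ha : 0 ≤ a)
    (hg : 0 ≤ g) (x : ℝ) : hjbPiPart p a g x (a ^ β / (g ^ β + a ^ β) * x)
      = g * a / (g ^ β + a ^ β) ^ (p - 1) * |x| ^ p := by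
  have hβ0 : β ≠ 0 := by rintro rfl; simp at hβ
  rcases (add_nonneg (Real.rpow_nonneg hg β) (Real.rpow_nonneg ha β)).eq_or_lt with hS | hS
  · obtain ⟨rfl, rfl⟩ := eq_zero_and_eq_zero_of_rpow_add_rpow_eq_zero hβ0 ha hg hS.symm
    simp [hjbPiPart]
  have hpow {z : ℝ} (hz : 0 ≤ z) : (z ^ β) ^ p = z ^ β * z := by
    rw [← rpow_sub_one_mul_self (by linarith) (Real.rpow_nonneg hz β),
      rpow_rpow_of_mul_eq_one hz hβ, mul_comm]
  rw [hjbPiPart_opt_of_pos ha hg hS, Real.mul_rpow (by positivity) (abs_nonneg x),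
    Real.mul_rpow (by positivity) (abs_nonneg x), Real.div_rpow (by positivity) hS.le,
    Real.div_rpow (by positivity) hS.le, hpow hg, hpow ha,
    ← rpow_sub_one_mul_self (by linarith) hS.le]
  have := Real.rpow_pos_of_pos hS (p - 1)
  field_simp

end Scalar

section LinearOperators

variable {d n : ℕ} (w : ℝ → Euc d → ℝ) (c t : ℝ) (y : Euc d)

theorem partialT_mul_const (s : Set ℝ) :
    partialT s (fun r z => w r z * c) t y = partialT s w t y * c :=
  derivWithin_mul_const_field c

theorem fderiv_mul_const_apply {E : Type*} [NormedAddCommGroup E] [NormedSpace ℝ E]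
    (f : E → ℝ) (z e : E) :
    fderiv ℝ (fun z' => f z' * c) z e = fderiv ℝ f z e * c := by
  rw [show (fun z' => f z' * c) = c • f by ext; simp [mul_comm], fderiv_const_smul_field]
  simp [mul_comm]

theorem gradY_mul_const (i : Fin d) :
    gradY (fun r z => w r z * c) t y i = gradY w t y i * c :=
  fderiv_mul_const_apply c (w t) y _

theorem hessY_mul_const (i j : Fin d) :
    hessY (fun r z => w r z * c) t y i j = hessY w t y i j * c := by
  simp only [hessY, fderiv_mul_const_apply]

theorem Lop_mul_const (b : Euc d → Euc d) (σ : Euc d → Matrix (Fin d) (Fin n) ℝ) :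
    Lop b σ (fun r z => w r z * c) t y = Lop b σ w t y * c := by
  simp only [Lop, hessY_mul_const, gradY_mul_const, add_mul, Finset.sum_mul, mul_assoc]

end LinearOperators

section Hamiltonian

variable {d : ℕ} {p θ : ℝ} {η lam gam : Euc d → ℝ} {v : ℝ → Euc d → ℝ} {t : ℝ} {y : Euc d}

theorem hjbInner_eq (hp : 1 < p) (x ξ q : ℝ) :
    hjbInner p θ η lam gam v t y x ξ q = hjbXiPart p (η y) (v t y) x ξ
      + θ * hjbPiPart p (v t y) (gam y) x q + (lam y - θ * v t y) * |x| ^ p := by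
  rw [hjbInner, ((hasDerivAt_abs_rpow x hp).const_mul (v t y)).deriv, hjbXiPart, hjbPiPart]
  ring

theorem hjbInner_xi_opt_le (hp : 1 < p) (hη : 0 < η y) (hv : 0 ≤ v t y) (x ξ q : ℝ) :
    hjbInner p θ η lam gam v t y x ((v t y / η y) ^ (1 / (p - 1)) * x) q
      ≤ hjbInner p θ η lam gam v t y x ξ q := by
  rw [hjbInner_eq hp, hjbInner_eq hp]
  linarith [hjbXiPart_opt_le hp (one_div_mul_cancel (by linarith)) hη hv x ξ]

theorem hjbInner_pi_opt_le (hp : 1 < p) (hθ : 0 ≤ θ) (hv : 0 ≤ v t y) (hgam : 0 ≤ gam y)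
    (x ξ q : ℝ) :
    hjbInner p θ η lam gam v t y x ξ
        (v t y ^ (1 / (p - 1)) / (gam y ^ (1 / (p - 1)) + v t y ^ (1 / (p - 1))) * x)
      ≤ hjbInner p θ η lam gam v t y x ξ q := by
  rw [hjbInner_eq hp, hjbInner_eq hp]
  linarith [mul_le_mul_of_nonneg_left
    (hjbPiPart_opt_le hp (one_div_mul_cancel (by linarith)) hv hgam x q) hθ]

theorem iInf_hjbInner (hp : 1 < p) (hθ : 0 ≤ θ) (hη : 0 < η y) (hv : 0 ≤ v t y)
    (hgam : 0 ≤ gam y) (x : ℝ) : ⨅ c : ℝ × ℝ, hjbInner p θ η lam gam v t y x c.1 c.2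
      = hjbF p θ η lam gam y (v t y) * |x| ^ p := by
  have hβ : 1 / (p - 1) * (p - 1) = 1 := one_div_mul_cancel (by linarith)
  set ξopt := (v t y / η y) ^ (1 / (p - 1)) * x
  set qopt := v t y ^ (1 / (p - 1)) / (gam y ^ (1 / (p - 1)) + v t y ^ (1 / (p - 1))) * x
  have hval : hjbInner p θ η lam gam v t y x ξopt qopt
      = hjbF p θ η lam gam y (v t y) * |x| ^ p := by
    rw [hjbInner_eq hp, hjbXiPart_opt_eq hp hβ hη hv, hjbPiPart_opt_eq hp hβ hv hgam, hjbF]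
    ring
  have hle (c : ℝ × ℝ) : hjbInner p θ η lam gam v t y x ξopt qopt
      ≤ hjbInner p θ η lam gam v t y x c.1 c.2 :=
    (hjbInner_pi_opt_le hp hθ hv hgam x ξopt c.2).trans (hjbInner_xi_opt_le hp hη hv x c.1 c.2)
  rw [← hval]
  exact le_antisymm (ciInf_le ⟨_, Set.forall_mem_range.2 hle⟩ (ξopt, qopt)) (le_ciInf hle)

end Hamiltonian

theorem hjb_verification_identity_general
    (d n : ℕ)
    (T p θ κ₀ : ℝ) (hp : 1 < p) (hθ : 0 ≤ θ) (hκ₀ : 0 < κ₀)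
    (b : Euc d → Euc d) (σ : Euc d → Matrix (Fin d) (Fin n) ℝ)
    (η lam gam : Euc d → ℝ)
    (hηκ : ∀ y, κ₀ ≤ η y)
    (hgam0 : ∀ y, 0 ≤ gam y)
    (v : ℝ → Euc d → ℝ)
    (hv0 : ∀ t ∈ Set.Ico (0 : ℝ) T, ∀ y, 0 ≤ v t y)
    (hpde : ∀ t ∈ Set.Ico (0 : ℝ) T, ∀ y,
      partialT (Set.Ico 0 T) v t y + Lop b σ v t y + hjbF p θ η lam gam y (v t y) = 0) :
    ∀ t ∈ Set.Ico (0 : ℝ) T, ∀ (y : Euc d) (x : ℝ),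
      (partialT (Set.Ico 0 T) (fun s z => v s z * |x| ^ p) t y
        + Lop b σ (fun s z => v s z * |x| ^ p) t y
        + ⨅ c : ℝ × ℝ, hjbInner p θ η lam gam v t y x c.1 c.2 = 0) ∧
      (∀ ξ q : ℝ,
        hjbInner p θ η lam gam v t y x ((v t y / η y) ^ (1 / (p - 1)) * x) q
          ≤ hjbInner p θ η lam gam v t y x ξ q) ∧
      (0 < gam y ^ (1 / (p - 1)) + v t y ^ (1 / (p - 1)) →
        ∀ ξ q : ℝ,
          hjbInner p θ η lam gam v t y x ξ
              (v t y ^ (1 / (p - 1)) / (gam y ^ (1 / (p - 1)) + v t y ^ (1 / (p - 1))) * x)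
            ≤ hjbInner p θ η lam gam v t y x ξ q) := by
  intro t ht y x
  have hη : 0 < η y := hκ₀.trans_le (hηκ y)
  have hv : 0 ≤ v t y := hv0 t ht y
  refine ⟨?_, hjbInner_xi_opt_le hp hη hv x, fun _ => hjbInner_pi_opt_le hp hθ hv (hgam0 y) x⟩
  rw [partialT_mul_const, Lop_mul_const, iInf_hjbInner hp hθ hη hv (hgam0 y)]
  linear_combination |x| ^ p * hpde t ht y

/-- Lemma 2.4, HJB verification identity: if `v ≥ 0` is `C^{1,2}` and
solves `v_t + Lv + F(y,v) = 0` on `[0,T) × ℝ^d` then `V(t,y,x) = v(t,y)|x|^p` solves the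
HJB equation; the infimum is attained in the `ξ`-variable at `ξ* = (v/η)^β x`, and,
when `γ(y)^β + v(t,y)^β > 0`, in the `π`-variable at `π* = v^β/(γ^β + v^β) · x`
(here `β = 1/(p−1)`). -/
theorem hjb_verification_identity
    (d n : ℕ) (hd : 1 ≤ d) (hn : 1 ≤ n)
    (T p θ κ₀ : ℝ) (hT : 0 < T) (hp : 1 < p) (hθ : 0 ≤ θ) (hκ₀ : 0 < κ₀)
    (b : Euc d → Euc d) (σ : Euc d → Matrix (Fin d) (Fin n) ℝ)
    (hbLip : ∃ K : ℝ≥0, LipschitzWith K b) (hbBdd : ∃ C, ∀ y, ‖b y‖ ≤ C)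
    (hσLip : ∃ K, ∀ y y' : Euc d, ∀ i k, |σ y i k - σ y' i k| ≤ K * ‖y - y'‖)
    (hσBdd : ∃ C, ∀ y i k, |σ y i k| ≤ C)
    (hell : ∃ ν > 0, ∀ (y : Euc d) (z : Fin d → ℝ),
      ν * ∑ i, z i ^ 2 ≤ ∑ i, ∑ j, (∑ k, σ y i k * σ y j k) * z j * z i)
    (η lam gam : Euc d → ℝ)
    (hηC2 : ContDiff ℝ 2 η)
    (hηBdd : ∃ C, ∀ y, |η y| ≤ C ∧ ‖fderiv ℝ η y‖ ≤ C ∧ ‖fderiv ℝ (fderiv ℝ η) y‖ ≤ C)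
    (hηκ : ∀ y, κ₀ ≤ η y)
    (hlamCont : Continuous lam) (hlam0 : ∀ y, 0 ≤ lam y) (hlamBdd : ∃ C, ∀ y, lam y ≤ C)
    (hgamCont : Continuous gam) (hgam0 : ∀ y, 0 ≤ gam y) (hgamBdd : ∃ C, ∀ y, gam y ≤ C)
    (v : ℝ → Euc d → ℝ)
    (hv0 : ∀ t ∈ Set.Ico (0 : ℝ) T, ∀ y, 0 ≤ v t y)
    (hvC12 : IsC12On (Set.Ico 0 T) v)
    (hpde : ∀ t ∈ Set.Ico (0 : ℝ) T, ∀ y,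
      partialT (Set.Ico 0 T) v t y + Lop b σ v t y + hjbF p θ η lam gam y (v t y) = 0) :
    ∀ t ∈ Set.Ico (0 : ℝ) T, ∀ (y : Euc d) (x : ℝ),
      (partialT (Set.Ico 0 T) (fun s z => v s z * |x| ^ p) t y
        + Lop b σ (fun s z => v s z * |x| ^ p) t y
        + ⨅ c : ℝ × ℝ, hjbInner p θ η lam gam v t y x c.1 c.2 = 0) ∧
      (∀ ξ q : ℝ,
        hjbInner p θ η lam gam v t y x ((v t y / η y) ^ (1 / (p - 1)) * x) q
          ≤ hjbInner p θ η lam gam v t y x ξ q) ∧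
      (0 < gam y ^ (1 / (p - 1)) + v t y ^ (1 / (p - 1)) →
        ∀ ξ q : ℝ,
          hjbInner p θ η lam gam v t y x ξ
              (v t y ^ (1 / (p - 1)) / (gam y ^ (1 / (p - 1)) + v t y ^ (1 / (p - 1))) * x)
            ≤ hjbInner p θ η lam gam v t y x ξ q) :=
  hjb_verification_identity_general d n T p θ κ₀ hp hθ hκ₀ b σ η lam gam hηκ hgam0 v hv0 hpde
end
end

section
/- Inner minimization over the dark-pool order in the HJB equation: for all real p > 1, β = 1/(p−1), γ > 0, v ≥ 0 and x ∈ ℝ, the convex function π ↦ γ|π|^p + v|x−π|^p on ℝ attains its global minimum at π* = v^β/(γ^β + v^β)·x, and the minimum value equals γ v |x|^p/(γ^β + v^β)^{1/β}. -/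
/-!
Write `γ = a ^ (p - 1)` and `v = b ^ (p - 1)`, i.e. `a = γ ^ β` and `b = v ^ β`. The lower bound is
Radon's inequality `(s + t) ^ p / (c + d) ^ (p - 1) ≤ s ^ p / c ^ (p - 1) + t ^ p / d ^ (p - 1)`,
which is Jensen's inequality for `y ↦ y ^ p` with weights `c / (c + d)`, `d / (c + d)` at the points
`s / c`, `t / d`. Taking `s = |q|`, `t = |x - q|`, `c = b`, `d = a` and using `|x| ≤ |q| + |x - q|`
bounds the cost below by `γ v |x| ^ p / (a + b) ^ (p - 1)`, and this value is attained at
`q* = b / (a + b) * x`, where `|q*| / b = |x - q*| / a` makes Jensen's inequality an equality.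
-/

open Real Set

lemma convexOn_abs_rpow {p : ℝ} (hp : 1 ≤ p) : ConvexOn ℝ univ fun x : ℝ => |x| ^ p := by
  refine ⟨convex_univ, fun x _ y _ a b ha hb hab => ?_⟩
  calc |a • x + b • y| ^ p ≤ (a * |x| + b * |y|) ^ p := by
        gcongr
        simpa [abs_mul, abs_of_nonneg ha, abs_of_nonneg hb] using abs_add_le (a * x) (b * y)
    _ ≤ a • |x| ^ p + b • |y| ^ p := (convexOn_rpow hp).2 (abs_nonneg x) (abs_nonneg y) ha hb hab

lemma convexOn_mul_abs_rpow_add_mul_abs_sub_rpow {p γ v : ℝ} (hp : 1 ≤ p) (hγ : 0 ≤ γ)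
    (hv : 0 ≤ v) (x : ℝ) : ConvexOn ℝ univ fun q : ℝ => γ * |q| ^ p + v * |x - q| ^ p :=
  ((convexOn_abs_rpow hp).smul hγ).add
    (((convexOn_abs_rpow hp).comp_affineMap (AffineMap.const ℝ ℝ x - AffineMap.id ℝ ℝ)).smul hv)

theorem radon_inequality {p c d s t : ℝ} (hp : 1 ≤ p) (hc : 0 < c) (hd : 0 < d) (hs : 0 ≤ s)
    (ht : 0 ≤ t) : (s + t) ^ p / (c + d) ^ (p - 1) ≤ s ^ p / c ^ (p - 1) + t ^ p / d ^ (p - 1) := by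
  have hcd : 0 < c + d := add_pos hc hd
  have hscale : ∀ {y z : ℝ}, 0 < y → 0 ≤ z → z ^ p / y ^ (p - 1) = y * (z / y) ^ p :=
    fun hy hz => by rw [rpow_sub_one hy.ne', div_rpow hz hy.le]; field_simp
  have hmean : (s + t) / (c + d) = c / (c + d) * (s / c) + d / (c + d) * (t / d) := by
    field_simp
  have hweights : c / (c + d) + d / (c + d) = 1 := by rw [← add_div, div_self hcd.ne']
  rw [hscale hcd (add_nonneg hs ht), hscale hc hs, hscale hd ht, hmean]
  calc (c + d) * (c / (c + d) * (s / c) + d / (c + d) * (t / d)) ^ p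
      ≤ (c + d) * (c / (c + d) * (s / c) ^ p + d / (c + d) * (t / d) ^ p) := by
        gcongr
        exact (convexOn_rpow hp).2 (div_nonneg hs hc.le) (div_nonneg ht hd.le)
          (div_nonneg hc.le hcd.le) (div_nonneg hd.le hcd.le) hweights
    _ = c * (s / c) ^ p + d * (t / d) ^ p := by field_simp

lemma le_mul_abs_rpow_add_mul_abs_sub_rpow {p a b : ℝ} (hp : 1 < p) (ha : 0 < a) (hb : 0 ≤ b)
    (x q : ℝ) :
    a ^ (p - 1) * b ^ (p - 1) * |x| ^ p / (a + b) ^ (p - 1)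
      ≤ a ^ (p - 1) * |q| ^ p + b ^ (p - 1) * |x - q| ^ p := by
  have hp1 : 0 < p - 1 := sub_pos.2 hp
  obtain rfl | hb := hb.eq_or_lt
  · rw [zero_rpow hp1.ne']
    simp only [mul_zero, zero_mul, zero_div, add_zero]
    positivity
  have htri : |x| ≤ |q| + |x - q| := by simpa using abs_add_le q (x - q)
  calc a ^ (p - 1) * b ^ (p - 1) * |x| ^ p / (a + b) ^ (p - 1)
      ≤ a ^ (p - 1) * b ^ (p - 1) * ((|q| + |x - q|) ^ p / (b + a) ^ (p - 1)) := by
        rw [add_comm a b, mul_div_assoc]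
        gcongr
    _ ≤ a ^ (p - 1) * b ^ (p - 1) * (|q| ^ p / b ^ (p - 1) + |x - q| ^ p / a ^ (p - 1)) := by
        gcongr
        exact radon_inequality hp.le hb ha (abs_nonneg q) (abs_nonneg (x - q))
    _ = a ^ (p - 1) * |q| ^ p + b ^ (p - 1) * |x - q| ^ p := by
        have : 0 < a ^ (p - 1) := by positivity
        have : 0 < b ^ (p - 1) := by positivity
        field_simp

lemma mul_abs_rpow_add_mul_abs_sub_rpow_at_minimizer {p a b : ℝ} (hp : p ≠ 0) (ha : 0 ≤ a)
    (hb : 0 ≤ b) (hab : 0 < a + b) (x : ℝ) :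
    a ^ (p - 1) * |b / (a + b) * x| ^ p + b ^ (p - 1) * |x - b / (a + b) * x| ^ p
      = a ^ (p - 1) * b ^ (p - 1) * |x| ^ p / (a + b) ^ (p - 1) := by
  have hsplit : ∀ {y : ℝ}, 0 ≤ y → y ^ p = y ^ (p - 1) * y := fun hy => by
    simpa using rpow_add' hy (by simpa : p - 1 + 1 ≠ 0)
  have hsub : x - b / (a + b) * x = a / (a + b) * x := by field_simp; ring
  have hsum : 0 < (a + b) ^ (p - 1) := rpow_pos_of_pos hab _
  rw [hsub, abs_mul, abs_mul, abs_div, abs_div, abs_of_nonneg ha, abs_of_nonneg hb,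
    abs_of_pos hab, mul_rpow (by positivity) (abs_nonneg x),
    mul_rpow (by positivity) (abs_nonneg x), div_rpow ha hab.le, div_rpow hb hab.le,
    hsplit ha, hsplit hb, hsplit hab.le]
  field_simp
  ring

/-- inner minimization over the dark-pool order: for `p > 1`,
`β = 1/(p−1)` (so `1/β = p−1`), `γ > 0`, `v ≥ 0`, `x ∈ ℝ`, the convex function
`q ↦ γ|q|^p + v|x−q|^p` attains its global minimum at `q* = v^β/(γ^β + v^β)·x`, with
minimum value `γ v |x|^p/(γ^β + v^β)^{1/β}`. -/
theorem inner_minimization_dark_pool (p γ v x : ℝ) (hp : 1 < p) (hγ : 0 < γ)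
    (hv : 0 ≤ v) :
    ConvexOn ℝ Set.univ (fun q : ℝ => γ * |q| ^ p + v * |x - q| ^ p) ∧
    (∀ q : ℝ,
      γ * |v ^ (1 / (p - 1)) / (γ ^ (1 / (p - 1)) + v ^ (1 / (p - 1))) * x| ^ p
          + v * |x - v ^ (1 / (p - 1)) / (γ ^ (1 / (p - 1)) + v ^ (1 / (p - 1))) * x| ^ p
        ≤ γ * |q| ^ p + v * |x - q| ^ p) ∧
    γ * |v ^ (1 / (p - 1)) / (γ ^ (1 / (p - 1)) + v ^ (1 / (p - 1))) * x| ^ p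
        + v * |x - v ^ (1 / (p - 1)) / (γ ^ (1 / (p - 1)) + v ^ (1 / (p - 1))) * x| ^ p
      = γ * v * |x| ^ p / ((γ ^ (1 / (p - 1)) + v ^ (1 / (p - 1))) ^ (p - 1)) := by
  refine ⟨convexOn_mul_abs_rpow_add_mul_abs_sub_rpow hp.le hγ.le hv x, ?_⟩
  have hp1 : p - 1 ≠ 0 := (sub_pos.2 hp).ne'
  obtain ⟨a, ha, rfl⟩ : ∃ a, 0 < a ∧ γ = a ^ (p - 1) :=
    ⟨γ ^ (p - 1)⁻¹, by positivity, (rpow_inv_rpow hγ.le hp1).symm⟩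
  obtain ⟨b, hb, rfl⟩ : ∃ b, 0 ≤ b ∧ v = b ^ (p - 1) :=
    ⟨v ^ (p - 1)⁻¹, by positivity, (rpow_inv_rpow hv hp1).symm⟩
  simp only [one_div, rpow_rpow_inv ha.le hp1, rpow_rpow_inv hb hp1]
  have hvalue := mul_abs_rpow_add_mul_abs_sub_rpow_at_minimizer (by positivity) ha.le hb
    (add_pos_of_pos_of_nonneg ha hb) x
  exact ⟨fun q => hvalue.trans_le (le_mul_abs_rpow_add_mul_abs_sub_rpow hp ha hb x q), hvalue⟩
end

section
/- Monotonicity of the HJB nonlinearity: for all real β > 0, θ ≥ 0, η > 0, γ ≥ 0 and λ ∈ ℝ, the function u ↦ λ − u^{β+1}/(β η^β) + θ γ u/(γ^β + u^β)^{1/β} − θ u is antitone (monotone nonincreasing) on [0,∞), where the third term is read as 0 when γ = u = 0. -/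
/-- monotonicity of the HJB nonlinearity: for `β > 0`, `θ ≥ 0`, `η > 0`,
`γ ≥ 0` and `λ ∈ ℝ`, the map `u ↦ λ − u^{β+1}/(β η^β) + θγu/(γ^β + u^β)^{1/β} − θu` is
antitone on `[0,∞)`; by Lean's conventions the third term is `0` when `γ = u = 0`. -/
theorem hjb_nonlinearity_antitone (β θ η γ lam : ℝ) (hβ : 0 < β) (hθ : 0 ≤ θ)
    (hη : 0 < η) (hγ : 0 ≤ γ) :
    AntitoneOn
      (fun u : ℝ =>
        lam - u ^ (β + 1) / (β * η ^ β) + θ * γ * u / ((γ ^ β + u ^ β) ^ (1 / β)) - θ * u)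
      (Set.Ici 0) := by
  intro u hu v hv huv
  simp only [Set.mem_Ici] at hu hv
  have hC : 0 < β * η ^ β := mul_pos hβ (Real.rpow_pos_of_pos hη β)
  have h1 : u ^ (β + 1) / (β * η ^ β) ≤ v ^ (β + 1) / (β * η ^ β) := by
    have hle : u ^ (β + 1) ≤ v ^ (β + 1) := Real.rpow_le_rpow hu huv (by linarith)
    gcongr
  have h2 : θ * γ * v / ((γ ^ β + v ^ β) ^ (1 / β)) - θ * v
      ≤ θ * γ * u / ((γ ^ β + u ^ β) ^ (1 / β)) - θ * u := by
    rcases eq_or_lt_of_le hγ with hγ0 | hγ0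
    · simp only [← hγ0, mul_zero, zero_mul, zero_div, zero_sub, neg_le_neg_iff]
      exact mul_le_mul_of_nonneg_left huv hθ
    · set Du := (γ ^ β + u ^ β) ^ (1 / β) with hDu_def
      set Dv := (γ ^ β + v ^ β) ^ (1 / β) with hDv_def
      have hsum_u : (0:ℝ) < γ ^ β + u ^ β :=
        add_pos_of_pos_of_nonneg (Real.rpow_pos_of_pos hγ0 β) (Real.rpow_nonneg hu β)
      have hsum_v : (0:ℝ) < γ ^ β + v ^ β :=
        add_pos_of_pos_of_nonneg (Real.rpow_pos_of_pos hγ0 β) (Real.rpow_nonneg hv β)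
      have hDu : 0 < Du := Real.rpow_pos_of_pos hsum_u _
      have hDv : 0 < Dv := Real.rpow_pos_of_pos hsum_v _
      have hDuv : Du ≤ Dv := by
        apply Real.rpow_le_rpow hsum_u.le _ (by positivity)
        have := Real.rpow_le_rpow hu huv hβ.le
        linarith
      have hγDu : γ ≤ Du := by
        have h0 : γ = (γ ^ β) ^ (1 / β) := by
          rw [one_div, Real.rpow_rpow_inv hγ hβ.ne']
        rw [h0]
        apply Real.rpow_le_rpow (Real.rpow_nonneg hγ β) _ (by positivity)
        have := Real.rpow_nonneg hu β
        linarith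
      have hγDv : γ ≤ Dv := le_trans hγDu hDuv
      have hcv : γ / Dv - 1 ≤ 0 := by
        have : γ / Dv ≤ 1 := (div_le_one hDv).mpr hγDv
        linarith
      have hcuv : γ / Dv ≤ γ / Du := div_le_div_of_nonneg_left hγ0.le hDu hDuv
      have hkey : v * (γ / Dv - 1) ≤ u * (γ / Du - 1) := by
        calc v * (γ / Dv - 1) ≤ u * (γ / Dv - 1) :=
              mul_le_mul_of_nonpos_right huv hcv
          _ ≤ u * (γ / Du - 1) := by
              apply mul_le_mul_of_nonneg_left _ hu
              linarith
      have := mul_le_mul_of_nonneg_left hkey hθ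
      have e1 : θ * γ * v / Dv - θ * v = θ * (v * (γ / Dv - 1)) := by ring
      have e2 : θ * γ * u / Du - θ * u = θ * (u * (γ / Du - 1)) := by ring
      rw [e1, e2]
      exact this
  simp only
  linarith
end

section
/- The dark-pool term is nonexpanding (derivative bound in the proof of Lemma 3.7): for all real a > 0 and β > 0, the function h : ℝ → ℝ defined by h(w) = a·w/(a^β + |w|^β)^{1/β} − w is 1-Lipschitz, i.e. |h(w₁) − h(w₂)| ≤ |w₁ − w₂| for all w₁, w₂ ∈ ℝ. -/
/-!
Write `h = g - id` with `g w = a w / (a^β + |w|^β)^(1/β)`. It suffices that both `g` and `id - g`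
are monotone, since then `0 ≤ g x - g y ≤ x - y` for `y ≤ x`. Both are odd, so only `[0, ∞)`
matters. There `g` is monotone because `x (a^β + y^β)^(1/β) ≤ y (a^β + x^β)^(1/β)` for `x ≤ y`
(raise both sides to the power `β`), and `w - g w = w (1 - a / (a^β + w^β)^(1/β))` is a product
of nonnegative nondecreasing factors.
-/

open Real Set

namespace Real

variable {a b c β : ℝ}

theorem le_rpow_add_rpow_one_div (ha : 0 ≤ a) (hb : 0 ≤ b) (hβ : 0 < β) :
    a ≤ (a ^ β + b ^ β) ^ (1 / β) := by
  calc a = (a ^ β) ^ (1 / β) := by rw [one_div, rpow_rpow_inv ha hβ.ne']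
    _ ≤ (a ^ β + b ^ β) ^ (1 / β) := by
      gcongr
      exact le_add_of_nonneg_right (rpow_nonneg hb β)

theorem mul_rpow_add_rpow_one_div_le (ha : 0 ≤ a) (hb : 0 ≤ b) (hbc : b ≤ c) (hβ : 0 < β) :
    b * (a ^ β + c ^ β) ^ (1 / β) ≤ c * (a ^ β + b ^ β) ^ (1 / β) := by
  have hc : 0 ≤ c := hb.trans hbc
  have key : b ^ β * (a ^ β + c ^ β) ≤ c ^ β * (a ^ β + b ^ β) := by
    nlinarith [rpow_le_rpow hb hbc hβ.le, rpow_nonneg ha β]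
  have hmul : ∀ x y : ℝ, 0 ≤ x → 0 ≤ y → x * y ^ (1 / β) = (x ^ β * y) ^ (1 / β) :=
    fun x y hx hy => by rw [mul_rpow (by positivity) hy, one_div, rpow_rpow_inv hx hβ.ne']
  rw [hmul b _ hb (by positivity), hmul c _ hc (by positivity)]
  exact rpow_le_rpow (by positivity) key (by positivity)

end Real

theorem abs_sub_sub_le_of_monotone {α : Type*} [AddCommGroup α] [LinearOrder α]
    [IsOrderedAddMonoid α] {f : α → α} (hf : Monotone f)
    (hf' : Monotone fun x => x - f x) (x y : α) : |(f x - x) - (f y - y)| ≤ |x - y| := by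
  wlog hxy : y ≤ x generalizing x y
  · rw [abs_sub_comm, abs_sub_comm x]
    exact this y x (le_of_not_ge hxy)
  have hd : 0 ≤ x - y := sub_nonneg.2 hxy
  have he : 0 ≤ f x - f y := sub_nonneg.2 (hf hxy)
  have hed : f x - f y ≤ x - y := by
    have := hf' hxy
    rw [sub_le_sub_iff] at this ⊢
    rwa [add_comm (f x)]
  rw [show (f x - x) - (f y - y) = (f x - f y) - (x - y) by abel, abs_of_nonneg hd, abs_le]
  exact ⟨by simpa using sub_le_sub_right he (x - y), (sub_nonpos.2 hed).trans hd⟩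

noncomputable def darkPoolMap (a β w : ℝ) : ℝ :=
  a * w / (a ^ β + |w| ^ β) ^ (1 / β)

section DarkPool

variable {a β : ℝ}

theorem darkPoolMap_neg (w : ℝ) : darkPoolMap a β (-w) = -darkPoolMap a β w := by
  simp only [darkPoolMap, abs_neg, mul_neg, neg_div]

theorem darkPoolMap_of_nonneg {w : ℝ} (hw : 0 ≤ w) :
    darkPoolMap a β w = a * w / (a ^ β + w ^ β) ^ (1 / β) := by
  rw [darkPoolMap, abs_of_nonneg hw]

theorem monotoneOn_darkPoolMap (ha : 0 < a) (hβ : 0 < β) :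
    MonotoneOn (darkPoolMap a β) (Ici 0) := by
  intro x (hx : 0 ≤ x) y (hy : 0 ≤ y) hxy
  rw [darkPoolMap_of_nonneg hx, darkPoolMap_of_nonneg hy,
    div_le_div_iff₀ (by positivity) (by positivity), mul_assoc, mul_assoc]
  exact mul_le_mul_of_nonneg_left (mul_rpow_add_rpow_one_div_le ha.le hx hxy hβ) ha.le

theorem monotoneOn_sub_darkPoolMap (ha : 0 < a) (hβ : 0 < β) :
    MonotoneOn (fun w => w - darkPoolMap a β w) (Ici 0) := by
  have hfactor : ∀ w, 0 ≤ w →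
      w - darkPoolMap a β w = w * (1 - a / (a ^ β + w ^ β) ^ (1 / β)) := fun w hw => by
    rw [darkPoolMap_of_nonneg hw]; ring
  intro x (hx : 0 ≤ x) y (hy : 0 ≤ y) hxy
  simp only [hfactor x hx, hfactor y hy]
  have hNx : a ≤ (a ^ β + x ^ β) ^ (1 / β) := le_rpow_add_rpow_one_div ha.le hx hβ
  refine mul_le_mul hxy (sub_le_sub_left ?_ 1) ?_ hy
  · exact div_le_div_of_nonneg_left ha.le (ha.trans_le hNx) (by gcongr)
  · rw [sub_nonneg, div_le_one (ha.trans_le hNx)]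
    exact hNx

theorem monotone_darkPoolMap (ha : 0 < a) (hβ : 0 < β) : Monotone (darkPoolMap a β) :=
  monotone_of_odd_of_monotoneOn_nonneg darkPoolMap_neg (monotoneOn_darkPoolMap ha hβ)

theorem monotone_sub_darkPoolMap (ha : 0 < a) (hβ : 0 < β) :
    Monotone fun w => w - darkPoolMap a β w :=
  monotone_of_odd_of_monotoneOn_nonneg (fun w => by rw [darkPoolMap_neg]; ring)
    (monotoneOn_sub_darkPoolMap ha hβ)

end DarkPool

/-- the dark-pool term is nonexpanding: for `a > 0` and `β > 0`, the
function `h(w) = a·w/(a^β + |w|^β)^{1/β} − w` is 1-Lipschitz. -/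
theorem dark_pool_term_nonexpanding (a β : ℝ) (ha : 0 < a) (hβ : 0 < β) :
    ∀ w₁ w₂ : ℝ,
      |(a * w₁ / ((a ^ β + |w₁| ^ β) ^ (1 / β)) - w₁)
          - (a * w₂ / ((a ^ β + |w₂| ^ β) ^ (1 / β)) - w₂)|
        ≤ |w₁ - w₂| :=
  abs_sub_sub_le_of_monotone (monotone_darkPoolMap ha hβ) (monotone_sub_darkPoolMap ha hβ)
end

section
/- Continuity of the nonlinearity along admissible curves (Lemma 3.7): for every R > 0 and every δ ∈ (0, κ₀/R], and every continuous function u : [0,δ] → Y with ‖u(t)‖ ≤ R t² for all t ∈ [0,δ], the map t ↦ f(t, u(t)) (with value 0 ∈ Y at t = 0) is a continuous map from [0,δ] into Y. Moreover, if u is α-Hölder continuous for some α ∈ (0,1), then t ↦ f(t, u(t)) is also α-Hölder continuous from [0,δ] into Y. -/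
noncomputable section

/-- Generalized binomial coefficient `binom(α,k) = (∏_{i=0}^{k−1}(α−i))/k!`. -/
noncomputable def rbinom (α : ℝ) (k : ℕ) : ℝ :=
  (∏ i ∈ Finset.range k, (α - i)) / (Nat.factorial k : ℝ)

/-- The singular nonlinearity `f(t,u)`, defined pointwise by
`f(t,u)(y) = t a(y) + t^p λ(y) − (η(y)/β) Σ_{k≥2} binom(β+1,k)(u(y)/(tη(y)))^k`
`+ θ[t^p γ(y)(tη(y)+u(y))/((t^p γ(y))^β + |tη(y)+u(y)|^β)^{1/β} − (tη(y)+u(y))]`,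
with `β = 1/(p−1)` and `1/β = p−1`; by Lean's conventions quotients with vanishing
denominator are read as `0`. -/
noncomputable def fNL {d : ℕ} (p θ : ℝ) (η γ lam a : Euc d → ℝ)
    (t : ℝ) (u : Euc d → ℝ) (y : Euc d) : ℝ :=
  t * a y + t ^ p * lam y
    - (η y / (1 / (p - 1))) *
        ∑' k : ℕ, rbinom (1 / (p - 1) + 1) (k + 2) * (u y / (t * η y)) ^ (k + 2)
    + θ * (t ^ p * γ y * (t * η y + u y) /
          ((t ^ p * γ y) ^ (1 / (p - 1)) + |t * η y + u y| ^ (1 / (p - 1))) ^ (p - 1)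
        - (t * η y + u y))

/-!
Pointwise in `y`, the nonlinearity obeys
`|f(s,v)(y) - f(t,w)(y)| ≤ K (|s - t| + |v(y) - w(y)|)` whenever `|v| ≤ R s²` and `|w| ≤ R t²`,
with `K` independent of `y`; continuity and Hölder continuity of `u` then pass to
`t ↦ f(t, u(t))`. Term by term: `t ↦ t^p` is Lipschitz on `[0, δ]`; since
`binom(β+1, k) = O(k^(-2-β))`, the series `Σ binom(β+1, k+2) x^(k+2)` has variation at most
`M m |x - z|` on `|x|, |z| ≤ m ≤ 1`, and for `x = u/(tη)` the factor `m = O(t)` absorbs the `1/t`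
in the variation of `x`; the `θ`-bracket is a parallel sum `(A^(-1/q) + w^(-1/q))^(-q)`, which
is `1`-Lipschitz in each argument.
-/

open Set Filter Asymptotics

theorem le_rpow_mul_rpow_of_le {x δ α : ℝ} (hx : 0 ≤ x) (hxδ : x ≤ δ) (hα : α ≤ 1) :
    x ≤ δ ^ (1 - α) * x ^ α :=
  calc x = x ^ (1 - α) * x ^ α := by
        rw [← Real.rpow_add' hx (by norm_num), sub_add_cancel, Real.rpow_one]
    _ ≤ δ ^ (1 - α) * x ^ α := by gcongr

theorem abs_rpow_sub_rpow_le {p δ s t : ℝ} (hp : 1 ≤ p) (hs : s ∈ Icc 0 δ) (ht : t ∈ Icc 0 δ) :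
    |s ^ p - t ^ p| ≤ p * δ ^ (p - 1) * |s - t| := by
  have hderiv : ∀ x ∈ Icc 0 δ,
      HasDerivWithinAt (fun x : ℝ => x ^ p) (p * x ^ (p - 1)) (Icc 0 δ) x :=
    fun x _ => (Real.hasDerivAt_rpow_const (Or.inr hp)).hasDerivWithinAt
  have hbound : ∀ x ∈ Icc 0 δ, ‖p * x ^ (p - 1)‖ ≤ p * δ ^ (p - 1) := fun x hx => by
    rw [Real.norm_eq_abs, abs_of_nonneg (by have := hx.1; positivity)]
    exact mul_le_mul_of_nonneg_left (Real.rpow_le_rpow hx.1 hx.2 (by linarith)) (by linarith)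
  simpa only [Real.norm_eq_abs] using
    (convex_Icc 0 δ).norm_image_sub_le_of_norm_hasDerivWithin_le hderiv hbound ht hs

theorem rbinom_succ (α : ℝ) (k : ℕ) : rbinom α (k + 1) = rbinom α k * ((α - k) / (k + 1)) := by
  rw [rbinom, rbinom, Finset.prod_range_succ, Nat.factorial_succ, div_mul_div_comm]
  push_cast
  ring

section rbinom

variable {α : ℝ}

/-- Bernoulli's inequality `(1 - 1/(k+1))^(1+α) ≥ 1 - (1+α)/(k+1)`, cleared of denominators. -/
theorem sub_div_add_one_mul_rpow_le (hα : 0 ≤ α) {k : ℝ} (hk : 0 < k) :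
    (k - α) / (k + 1) * (k + 1) ^ (1 + α) ≤ k ^ (1 + α) := by
  have hk1 : 0 < k + 1 := by linarith
  have hbern := one_add_mul_self_le_rpow_one_add (s := -(1 / (k + 1)))
    (by rw [neg_le_neg_iff, div_le_one hk1]; linarith) (by linarith : 1 ≤ 1 + α)
  rw [show 1 + -(1 / (k + 1)) = k / (k + 1) by field_simp; ring,
    show 1 + (1 + α) * -(1 / (k + 1)) = (k - α) / (k + 1) by field_simp; ring,
    Real.div_rpow hk.le hk1.le, le_div_iff₀ (by positivity)] at hbern
  exact hbern

theorem rpow_mul_abs_rbinom_succ_le (hα : 0 ≤ α) {k : ℕ} (hk : α ≤ k) (hk0 : 0 < k) :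
    ((k + 1 : ℕ) : ℝ) ^ (1 + α) * |rbinom α (k + 1)| ≤ (k : ℝ) ^ (1 + α) * |rbinom α k| := by
  have hk0' : (0 : ℝ) < k := by exact_mod_cast hk0
  rw [rbinom_succ, abs_mul, abs_div, abs_of_nonpos (by linarith : α - k ≤ 0),
    abs_of_pos (by positivity : (0 : ℝ) < k + 1), neg_sub]
  calc ((k + 1 : ℕ) : ℝ) ^ (1 + α) * (|rbinom α k| * ((k - α) / (k + 1)))
      = |rbinom α k| * ((k - α) / (k + 1) * ((k : ℝ) + 1) ^ (1 + α)) := by push_cast; ring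
    _ ≤ |rbinom α k| * (k : ℝ) ^ (1 + α) := by
        gcongr; exact sub_div_add_one_mul_rpow_le hα hk0'
    _ = (k : ℝ) ^ (1 + α) * |rbinom α k| := mul_comm _ _

theorem natCast_mul_abs_rbinom_isBigO (hα : 0 ≤ α) :
    (fun k : ℕ => (k : ℝ) * |rbinom α k|) =O[atTop] fun k : ℕ => (k : ℝ) ^ (-α) := by
  obtain ⟨N, hαN, hN⟩ : ∃ N : ℕ, α ≤ N ∧ 0 < N :=
    ⟨⌈α⌉₊ + 1, by push_cast; linarith [Nat.le_ceil α], Nat.succ_pos _⟩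
  have hmono : Antitone fun j : ℕ => ((N + j : ℕ) : ℝ) ^ (1 + α) * |rbinom α (N + j)| :=
    antitone_nat_of_succ_le fun j => rpow_mul_abs_rbinom_succ_le (k := N + j) hα
      (by push_cast; linarith [(Nat.cast_nonneg j : (0 : ℝ) ≤ j)]) (by omega)
  refine IsBigO.of_bound ((N : ℝ) ^ (1 + α) * |rbinom α N|) ?_
  filter_upwards [eventually_ge_atTop N] with k hk
  obtain ⟨j, rfl⟩ := Nat.exists_eq_add_of_le hk
  have hpos : (0 : ℝ) < ((N + j : ℕ) : ℝ) := by positivity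
  rw [Real.norm_of_nonneg (by positivity), Real.norm_of_nonneg (by positivity)]
  calc ((N + j : ℕ) : ℝ) * |rbinom α (N + j)|
      = ((N + j : ℕ) : ℝ) ^ (1 + α) * |rbinom α (N + j)| * ((N + j : ℕ) : ℝ) ^ (-α) := by
        rw [mul_right_comm, ← Real.rpow_add hpos]; simp
    _ ≤ (N : ℝ) ^ (1 + α) * |rbinom α N| * ((N + j : ℕ) : ℝ) ^ (-α) :=
        mul_le_mul_of_nonneg_right (by simpa using hmono (Nat.zero_le j)) (by positivity)

theorem summable_add_two_mul_abs_rbinom (hα : 1 < α) :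
    Summable fun k : ℕ => ((k : ℝ) + 2) * |rbinom α (k + 2)| := by
  have h := summable_of_isBigO_nat (Real.summable_nat_rpow.2 (by linarith))
    (natCast_mul_abs_rbinom_isBigO (by linarith : 0 ≤ α))
  simpa using (summable_nat_add_iff 2).2 h

end rbinom

theorem abs_tsum_mul_pow_sub_tsum_mul_pow_le {c : ℕ → ℝ}
    (hc : Summable fun k : ℕ => ((k : ℝ) + 2) * |c k|) {x z m : ℝ}
    (hx : |x| ≤ m) (hz : |z| ≤ m) (hm : m ≤ 1) :
    |∑' k, c k * x ^ (k + 2) - ∑' k, c k * z ^ (k + 2)|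
      ≤ (∑' k : ℕ, ((k : ℝ) + 2) * |c k|) * m * |x - z| := by
  have hm0 : 0 ≤ m := (abs_nonneg x).trans hx
  have hsummable : ∀ y : ℝ, |y| ≤ m → Summable fun k => c k * y ^ (k + 2) := fun y hy =>
    hc.of_norm_bounded fun k => by
      have hpow : |y| ^ (k + 2) ≤ 1 := pow_le_one₀ (abs_nonneg _) (hy.trans hm)
      rw [Real.norm_eq_abs, abs_mul, abs_pow]
      nlinarith [abs_nonneg (c k), (Nat.cast_nonneg k : (0 : ℝ) ≤ k)]
  have hterm : ∀ k : ℕ, ‖c k * x ^ (k + 2) - c k * z ^ (k + 2)‖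
      ≤ ((k : ℝ) + 2) * |c k| * (m * |x - z|) := fun k => by
    have hmax : max |x| |z| ^ (k + 1) ≤ m :=
      (pow_le_pow_left₀ (le_max_of_le_left (abs_nonneg x)) (max_le hx hz) _).trans
        (pow_le_of_le_one hm0 hm (by omega))
    calc ‖c k * x ^ (k + 2) - c k * z ^ (k + 2)‖ = |c k| * |x ^ (k + 2) - z ^ (k + 2)| := by
          rw [Real.norm_eq_abs, ← mul_sub, abs_mul]
      _ ≤ |c k| * (|x - z| * (k + 2 : ℕ) * max |x| |z| ^ (k + 2 - 1)) := by
          gcongr; exact abs_pow_sub_pow_le ..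
      _ = ((k : ℝ) + 2) * |c k| * (max |x| |z| ^ (k + 1) * |x - z|) := by
          rw [show k + 2 - 1 = k + 1 from rfl]; push_cast; ring
      _ ≤ ((k : ℝ) + 2) * |c k| * (m * |x - z|) := by gcongr
  rw [← (hsummable x hx).tsum_sub (hsummable z hz), ← Real.norm_eq_abs, mul_assoc]
  exact tsum_of_norm_bounded (hc.hasSum.mul_right _) hterm

theorem abs_div_mul_le {κ₀ e R s v : ℝ} (hκ₀ : 0 < κ₀) (he : κ₀ ≤ e) (hs : 0 ≤ s)
    (hv : |v| ≤ R * s ^ 2) : |v / (s * e)| ≤ R * s / κ₀ := by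
  rcases hs.eq_or_lt with rfl | hs
  · simp
  have hse : 0 < s * e := mul_pos hs (hκ₀.trans_le he)
  rw [abs_div, abs_of_pos hse, div_le_div_iff₀ hse hκ₀]
  nlinarith [mul_le_mul_of_nonneg_left he ((abs_nonneg v).trans hv)]

theorem mul_abs_div_sub_div_le {κ₀ e R s t v w : ℝ} (hκ₀ : 0 < κ₀) (he : κ₀ ≤ e) (hR : 0 ≤ R)
    (hs : 0 ≤ s) (hst : s ≤ t) (hv : |v| ≤ R * s ^ 2) :
    t * |w / (t * e) - v / (s * e)| ≤ (|w - v| + R * s * (t - s)) / κ₀ := by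
  rcases (hs.trans hst).eq_or_lt with rfl | ht
  · simp only [zero_mul]; positivity
  have he0 : 0 < e := hκ₀.trans_le he
  have hxs := abs_div_mul_le hκ₀ he hs hv
  have hsplit : t * (w / (t * e) - v / (s * e)) = (w - v) / e - v / (s * e) * (t - s) := by
    rcases hs.eq_or_lt with rfl | hs
    · obtain rfl : v = 0 := by simpa using hv
      simp only [zero_mul, div_zero, sub_zero]
      field_simp
    · field_simp; ring
  rw [← abs_of_pos ht, ← abs_mul, abs_of_pos ht, hsplit]
  calc |(w - v) / e - v / (s * e) * (t - s)| ≤ |w - v| / e + |v / (s * e)| * (t - s) := by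
        refine (abs_sub _ _).trans ?_
        rw [abs_div, abs_of_pos he0, abs_mul, abs_of_nonneg (sub_nonneg.2 hst)]
    _ ≤ |w - v| / κ₀ + R * s / κ₀ * (t - s) := by
        gcongr
    _ = (|w - v| + R * s * (t - s)) / κ₀ := by ring

theorem abs_tsum_div_sub_tsum_div_le {c : ℕ → ℝ}
    (hc : Summable fun k : ℕ => ((k : ℝ) + 2) * |c k|) {κ₀ e R s t v w : ℝ}
    (hκ₀ : 0 < κ₀) (he : κ₀ ≤ e) (hR : 0 ≤ R) (hs : 0 ≤ s) (ht : 0 ≤ t)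
    (hRs : R * s ≤ κ₀) (hRt : R * t ≤ κ₀) (hv : |v| ≤ R * s ^ 2) (hw : |w| ≤ R * t ^ 2) :
    |∑' k, c k * (v / (s * e)) ^ (k + 2) - ∑' k, c k * (w / (t * e)) ^ (k + 2)|
      ≤ (∑' k : ℕ, ((k : ℝ) + 2) * |c k|) * (R / κ₀ ^ 2) * (|v - w| + κ₀ * |s - t|) := by
  wlog hst : s ≤ t generalizing s t v w
  · rw [abs_sub_comm, abs_sub_comm v, abs_sub_comm s]
    exact this ht hs hRt hRs hw hv (le_of_not_ge hst)
  have hM : 0 ≤ ∑' k : ℕ, ((k : ℝ) + 2) * |c k| := tsum_nonneg fun k => by positivity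
  have hxs : |v / (s * e)| ≤ R * t / κ₀ := (abs_div_mul_le hκ₀ he hs hv).trans (by gcongr)
  have hxt : |w / (t * e)| ≤ R * t / κ₀ := abs_div_mul_le hκ₀ he ht hw
  calc _ ≤ (∑' k : ℕ, ((k : ℝ) + 2) * |c k|) * (R * t / κ₀) * |v / (s * e) - w / (t * e)| :=
        abs_tsum_mul_pow_sub_tsum_mul_pow_le hc hxs hxt ((div_le_one hκ₀).2 hRt)
    _ = (∑' k : ℕ, ((k : ℝ) + 2) * |c k|) * (R / κ₀) * (t * |w / (t * e) - v / (s * e)|) := by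
        rw [abs_sub_comm]; ring
    _ ≤ (∑' k : ℕ, ((k : ℝ) + 2) * |c k|) * (R / κ₀) * ((|w - v| + R * s * (t - s)) / κ₀) := by
        gcongr; exact mul_abs_div_sub_div_le hκ₀ he hR hs hst hv
    _ = (∑' k : ℕ, ((k : ℝ) + 2) * |c k|) * (R / κ₀ ^ 2) * (|w - v| + R * s * (t - s)) := by
        ring
    _ ≤ (∑' k : ℕ, ((k : ℝ) + 2) * |c k|) * (R / κ₀ ^ 2) * (|v - w| + κ₀ * |s - t|) := by
        rw [abs_sub_comm w, abs_sub_comm s, abs_of_nonneg (sub_nonneg.2 hst)]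
        gcongr

/-- For `A, w > 0` this is `(A^(-1/q) + w^(-1/q))^(-q)`, the `q`-parallel sum of `A` and `w`. -/
def parallelSum (q A w : ℝ) : ℝ := A * w / (A ^ (1 / q) + w ^ (1 / q)) ^ q

theorem parallelSum_comm (q A w : ℝ) : parallelSum q A w = parallelSum q w A := by
  rw [parallelSum, parallelSum, mul_comm, add_comm]

section parallelSum

variable {q A B w v : ℝ}

theorem parallelSum_le_parallelSum (hq : 0 < q) (hA : 0 ≤ A) (hw : 0 ≤ w) (hwv : w ≤ v) :
    parallelSum q A w ≤ parallelSum q A v := by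
  rcases hA.eq_or_lt with rfl | hA
  · simp [parallelSum]
  have hv : 0 ≤ v := hw.trans hwv
  have hroot : ∀ {x : ℝ}, 0 ≤ x → (x ^ (1 / q)) ^ q = x := fun hx => by
    rw [one_div, Real.rpow_inv_rpow hx hq.ne']
  have hwv' : w ^ (1 / q) ≤ v ^ (1 / q) := by gcongr
  have key : w * (A ^ (1 / q) + v ^ (1 / q)) ^ q ≤ v * (A ^ (1 / q) + w ^ (1 / q)) ^ q := by
    rw [← hroot hw, ← hroot hv, ← Real.mul_rpow (by positivity) (by positivity),
      ← Real.mul_rpow (by positivity) (by positivity), hroot hw, hroot hv]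
    gcongr ?_ ^ q
    nlinarith [Real.rpow_pos_of_pos hA (1 / q)]
  unfold parallelSum
  rw [div_le_div_iff₀ (by positivity) (by positivity), mul_assoc, mul_assoc]
  exact mul_le_mul_of_nonneg_left key hA.le

theorem parallelSum_sub_parallelSum_le (hq : 0 < q) (hA : 0 ≤ A) (hw : 0 ≤ w) (hwv : w ≤ v) :
    parallelSum q A v - parallelSum q A w ≤ v - w := by
  rcases hA.eq_or_lt with rfl | hA
  · simp [parallelSum]; linarith
  have hv : 0 ≤ v := hw.trans hwv
  have hDv : 0 < (A ^ (1 / q) + v ^ (1 / q)) ^ q := by positivity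
  have hAD : A ≤ (A ^ (1 / q) + v ^ (1 / q)) ^ q :=
    calc A = (A ^ (1 / q)) ^ q := by rw [one_div, Real.rpow_inv_rpow hA.le hq.ne']
      _ ≤ (A ^ (1 / q) + v ^ (1 / q)) ^ q := by gcongr; exact le_add_of_nonneg_right (by positivity)
  calc parallelSum q A v - parallelSum q A w
      ≤ A * v / (A ^ (1 / q) + v ^ (1 / q)) ^ q - A * w / (A ^ (1 / q) + v ^ (1 / q)) ^ q := by
        unfold parallelSum; gcongr
    _ = A / (A ^ (1 / q) + v ^ (1 / q)) ^ q * (v - w) := by ring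
    _ ≤ 1 * (v - w) := by
        gcongr
        exact (div_le_one hDv).2 hAD
    _ = v - w := one_mul _

theorem abs_parallelSum_sub_parallelSum_right_le (hq : 0 < q) (hA : 0 ≤ A) (hw : 0 ≤ w)
    (hv : 0 ≤ v) : |parallelSum q A w - parallelSum q A v| ≤ |w - v| := by
  wlog hwv : w ≤ v generalizing w v
  · rw [abs_sub_comm, abs_sub_comm w]
    exact this hv hw (le_of_not_ge hwv)
  rw [abs_sub_comm, abs_of_nonneg (sub_nonneg.2 (parallelSum_le_parallelSum hq hA hw hwv)),
    abs_sub_comm, abs_of_nonneg (sub_nonneg.2 hwv)]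
  exact parallelSum_sub_parallelSum_le hq hA hw hwv

theorem abs_parallelSum_sub_parallelSum_le (hq : 0 < q) (hA : 0 ≤ A) (hB : 0 ≤ B) (hw : 0 ≤ w)
    (hv : 0 ≤ v) : |parallelSum q A w - parallelSum q B v| ≤ |A - B| + |w - v| :=
  calc |parallelSum q A w - parallelSum q B v|
      ≤ |parallelSum q A w - parallelSum q A v| + |parallelSum q A v - parallelSum q B v| :=
        abs_sub_le _ _ _
    _ ≤ |w - v| + |A - B| := by
        refine add_le_add (abs_parallelSum_sub_parallelSum_right_le hq hA hw hv) ?_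
        rw [parallelSum_comm q A, parallelSum_comm q B]
        exact abs_parallelSum_sub_parallelSum_right_le hq hv hA hB
    _ = |A - B| + |w - v| := add_comm _ _

end parallelSum

theorem mul_add_nonneg_of_abs_le {κ₀ e R t v : ℝ} (he : κ₀ ≤ e) (ht : 0 ≤ t)
    (hRt : R * t ≤ κ₀) (hv : |v| ≤ R * t ^ 2) : 0 ≤ t * e + v := by
  nlinarith [neg_abs_le v, mul_le_mul_of_nonneg_left he ht, mul_le_mul_of_nonneg_left hRt ht]

theorem abs_parallelSum_sub_sub_le {q p δ e g s t v w : ℝ} (hq : 0 < q) (hp : 1 ≤ p)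
    (hg : 0 ≤ g) (hs : s ∈ Icc 0 δ) (ht : t ∈ Icc 0 δ) (hsv : 0 ≤ s * e + v)
    (htw : 0 ≤ t * e + w) :
    |(parallelSum q (s ^ p * g) (s * e + v) - (s * e + v))
        - (parallelSum q (t ^ p * g) (t * e + w) - (t * e + w))|
      ≤ g * (p * δ ^ (p - 1) * |s - t|) + 2 * (|e| * |s - t| + |v - w|) := by
  have hA : |s ^ p * g - t ^ p * g| ≤ g * (p * δ ^ (p - 1) * |s - t|) := by
    rw [← sub_mul, abs_mul, abs_of_nonneg hg, mul_comm]
    gcongr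
    exact abs_rpow_sub_rpow_le hp hs ht
  have hW : |s * e + v - (t * e + w)| ≤ |e| * |s - t| + |v - w| := by
    rw [show s * e + v - (t * e + w) = (s - t) * e + (v - w) by ring, mul_comm, ← abs_mul]
    exact abs_add_le _ _
  calc _ ≤ |parallelSum q (s ^ p * g) (s * e + v) - parallelSum q (t ^ p * g) (t * e + w)|
        + |s * e + v - (t * e + w)| := by
        rw [sub_sub_sub_comm]; exact abs_sub _ _
    _ ≤ g * (p * δ ^ (p - 1) * |s - t|) + 2 * (|e| * |s - t| + |v - w|) := by
        linarith [abs_parallelSum_sub_parallelSum_le hq (mul_nonneg (Real.rpow_nonneg hs.1 p) hg)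
          (mul_nonneg (Real.rpow_nonneg ht.1 p) hg) hsv htw]

theorem abs_add_sub_add_sub_le_four (a b c d a' b' c' d' : ℝ) :
    |(a + b - c + d) - (a' + b' - c' + d')| ≤ |a - a'| + |b - b'| + |c - c'| + |d - d'| :=
  calc |(a + b - c + d) - (a' + b' - c' + d')| = |(a - a') + (b - b') - (c - c') + (d - d')| := by
        congr 1; ring
    _ ≤ |a - a'| + |b - b'| + |c - c'| + |d - d'| :=
        (abs_add_le _ _).trans (add_le_add ((abs_sub _ _).trans
          (add_le_add (abs_add_le _ _) le_rfl)) le_rfl)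

theorem fNL_apply_of_nonneg {d : ℕ} {p θ t : ℝ} {η γ lam a u : Euc d → ℝ} {y : Euc d}
    (h : 0 ≤ t * η y + u y) :
    fNL p θ η γ lam a t u y = t * a y + t ^ p * lam y
      - η y / (1 / (p - 1)) *
          ∑' k : ℕ, rbinom (1 / (p - 1) + 1) (k + 2) * (u y / (t * η y)) ^ (k + 2)
      + θ * (parallelSum (p - 1) (t ^ p * γ y) (t * η y + u y) - (t * η y + u y)) := by
  rw [fNL, parallelSum, abs_of_nonneg h]

theorem exists_abs_fNL_sub_fNL_le {d : ℕ} {p θ κ₀ R δ C : ℝ} {η γ lam a : Euc d → ℝ}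
    (hp : 1 < p) (hθ : 0 ≤ θ) (hκ₀ : 0 < κ₀) (hR : 0 ≤ R) (hδ : 0 ≤ δ)
    (hRδ : R * δ ≤ κ₀) (hηC : ∀ y, |η y| ≤ C) (hγC : ∀ y, |γ y| ≤ C)
    (hlamC : ∀ y, |lam y| ≤ C) (haC : ∀ y, |a y| ≤ C) (hη : ∀ y, κ₀ ≤ η y)
    (hγ : ∀ y, 0 ≤ γ y) :
    ∃ K, 0 ≤ K ∧ ∀ s ∈ Icc 0 δ, ∀ t ∈ Icc 0 δ, ∀ (v w : Euc d → ℝ) (y : Euc d),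
      |v y| ≤ R * s ^ 2 → |w y| ≤ R * t ^ 2 →
      |fNL p θ η γ lam a s v y - fNL p θ η γ lam a t w y| ≤ K * (|s - t| + |v y - w y|) := by
  have hC : 0 ≤ C := (abs_nonneg _).trans (hηC 0)
  have hp1 : 0 < p - 1 := sub_pos.2 hp
  have hsum := summable_add_two_mul_abs_rbinom
    (α := 1 / (p - 1) + 1) (by linarith [one_div_pos.2 hp1])
  set M := ∑' k : ℕ, ((k : ℝ) + 2) * |rbinom (1 / (p - 1) + 1) (k + 2)|
  have hM : 0 ≤ M := tsum_nonneg fun k => by positivity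
  set L := p * δ ^ (p - 1)
  have hL : 0 ≤ L := mul_nonneg (by linarith) (Real.rpow_nonneg hδ _)
  refine ⟨C + C * L + C * (p - 1) * (M * (R / κ₀ ^ 2)) * (1 + κ₀) + θ * (C * L + 2 * C + 2),
    by positivity, fun s hs t ht v w y hv hw => ?_⟩
  have hRs : R * s ≤ κ₀ := (mul_le_mul_of_nonneg_left hs.2 hR).trans hRδ
  have hRt : R * t ≤ κ₀ := (mul_le_mul_of_nonneg_left ht.2 hR).trans hRδ
  have hsv := mul_add_nonneg_of_abs_le (hη y) hs.1 hRs hv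
  have htw := mul_add_nonneg_of_abs_le (hη y) ht.1 hRt hw
  rw [fNL_apply_of_nonneg hsv, fNL_apply_of_nonneg htw]
  set D := |s - t|
  set E := |v y - w y|
  calc _ ≤ C * D + C * (L * D) + C * (p - 1) * (M * (R / κ₀ ^ 2) * (E + κ₀ * D))
        + θ * (C * (L * D) + 2 * (C * D + E)) := by
        refine (abs_add_sub_add_sub_le_four ..).trans
          (add_le_add (add_le_add (add_le_add ?_ ?_) ?_) ?_)
        · rw [← sub_mul, abs_mul, mul_comm]
          exact mul_le_mul_of_nonneg_right (haC y) (abs_nonneg _)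
        · rw [← sub_mul, abs_mul, mul_comm]
          exact mul_le_mul (hlamC y) (abs_rpow_sub_rpow_le hp.le hs ht) (abs_nonneg _) hC
        · rw [← mul_sub, abs_mul, div_div_eq_mul_div, div_one, abs_mul, abs_of_pos hp1]
          exact mul_le_mul (mul_le_mul_of_nonneg_right (hηC y) hp1.le)
            (abs_tsum_div_sub_tsum_div_le hsum hκ₀ (hη y) hR hs.1 ht.1 hRs hRt hv hw)
            (abs_nonneg _) (by positivity)
        · rw [← mul_sub, abs_mul, abs_of_nonneg hθ]
          refine mul_le_mul_of_nonneg_left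
            ((abs_parallelSum_sub_sub_le hp1 hp.le (hγ y) hs ht hsv htw).trans ?_) hθ
          gcongr
          exacts [(le_abs_self _).trans (hγC y), hηC y]
    _ ≤ (C + C * L + C * (p - 1) * (M * (R / κ₀ ^ 2)) * (1 + κ₀) + θ * (C * L + 2 * C + 2))
        * (D + E) := by
        have : 0 ≤ C * E + C * L * E + C * (p - 1) * (M * (R / κ₀ ^ 2)) * (D + κ₀ * E)
            + θ * (C * L * E + 2 * C * E + 2 * D) := by positivity
        linear_combination this

section Transfer

variable {X : Type*} {f u : ℝ → X → ℝ} {K : ℝ}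

theorem uniform_continuity_of_le_mul_add (hK : 0 ≤ K) {S : Set ℝ}
    (hf : ∀ s ∈ S, ∀ t ∈ S, ∀ y, |f s y - f t y| ≤ K * (|s - t| + |u s y - u t y|))
    (hu : ∀ t₀ ∈ S, ∀ ε > (0 : ℝ), ∃ ρ > (0 : ℝ),
      ∀ t ∈ S, |t - t₀| ≤ ρ → ∀ y, |u t y - u t₀ y| ≤ ε) :
    ∀ t₀ ∈ S, ∀ ε > (0 : ℝ), ∃ ρ > (0 : ℝ),
      ∀ t ∈ S, |t - t₀| ≤ ρ → ∀ y, |f t y - f t₀ y| ≤ ε := by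
  intro t₀ ht₀ ε hε
  have hε' : 0 < ε / (2 * (K + 1)) := by positivity
  obtain ⟨ρ, hρ, hρu⟩ := hu t₀ ht₀ _ hε'
  refine ⟨min ρ (ε / (2 * (K + 1))), lt_min hρ hε', fun t ht htt₀ y => ?_⟩
  calc |f t y - f t₀ y| ≤ K * (ε / (2 * (K + 1)) + ε / (2 * (K + 1))) := by
        refine (hf t ht t₀ ht₀ y).trans ?_
        gcongr
        · exact htt₀.trans (min_le_right _ _)
        · exact hρu t ht (htt₀.trans (min_le_left _ _)) y
    _ = ε * (K / (K + 1)) := by field_simp; ring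
    _ ≤ ε := mul_le_of_le_one_right hε.le ((div_le_one (by positivity)).2 (by linarith))

theorem holder_of_le_mul_add (hK : 0 ≤ K) {δ C α : ℝ} (hα : α ≤ 1)
    (hf : ∀ s ∈ Icc 0 δ, ∀ t ∈ Icc 0 δ, ∀ y, |f s y - f t y| ≤ K * (|s - t| + |u s y - u t y|))
    (hu : ∀ s ∈ Icc 0 δ, ∀ t ∈ Icc 0 δ, ∀ y, |u s y - u t y| ≤ C * |s - t| ^ α) :
    ∀ s ∈ Icc 0 δ, ∀ t ∈ Icc 0 δ, ∀ y,
      |f s y - f t y| ≤ K * (δ ^ (1 - α) + C) * |s - t| ^ α := by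
  intro s hs t ht y
  have hst : |s - t| ≤ δ := abs_sub_le_iff.2 ⟨by linarith [hs.2, ht.1], by linarith [hs.1, ht.2]⟩
  calc |f s y - f t y| ≤ K * (δ ^ (1 - α) * |s - t| ^ α + C * |s - t| ^ α) := by
        refine (hf s hs t ht y).trans ?_
        gcongr
        · exact le_rpow_mul_rpow_of_le (abs_nonneg _) hst hα
        · exact hu s hs t ht y
    _ = K * (δ ^ (1 - α) + C) * |s - t| ^ α := by ring

end Transfer

theorem nonlinearity_continuous_along_curves_general
    (d : ℕ) (p θ κ₀ : ℝ) (hp : 1 < p) (hθ : 0 ≤ θ) (hκ₀ : 0 < κ₀)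
    (η γ lam a : Euc d → ℝ)
    (hηb : ∃ C, ∀ y, |η y| ≤ C) (hγb : ∃ C, ∀ y, |γ y| ≤ C)
    (hlamb : ∃ C, ∀ y, |lam y| ≤ C) (hab : ∃ C, ∀ y, |a y| ≤ C)
    (hηκ : ∀ y, κ₀ ≤ η y) (hγ0 : ∀ y, 0 ≤ γ y)
    (R δ : ℝ) (hR : 0 < R) (hδ0 : 0 < δ) (hδ : δ ≤ κ₀ / R)
    (u : ℝ → Euc d → ℝ)
    (huY : ∀ t₀ ∈ Set.Icc (0 : ℝ) δ, ∀ ε > (0 : ℝ), ∃ ρ > (0 : ℝ),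
      ∀ t ∈ Set.Icc (0 : ℝ) δ, |t - t₀| ≤ ρ → ∀ y, |u t y - u t₀ y| ≤ ε)
    (hub : ∀ t ∈ Set.Icc (0 : ℝ) δ, ∀ y, |u t y| ≤ R * t ^ 2) :
    (∀ t₀ ∈ Set.Icc (0 : ℝ) δ, ∀ ε > (0 : ℝ), ∃ ρ > (0 : ℝ),
      ∀ t ∈ Set.Icc (0 : ℝ) δ, |t - t₀| ≤ ρ → ∀ y,
        |fNL p θ η γ lam a t (u t) y - fNL p θ η γ lam a t₀ (u t₀) y| ≤ ε) ∧
    (∀ α : ℝ, 0 < α → α < 1 →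
      (∃ C, ∀ s ∈ Set.Icc (0 : ℝ) δ, ∀ t ∈ Set.Icc (0 : ℝ) δ, ∀ y,
        |u s y - u t y| ≤ C * |s - t| ^ α) →
      ∃ C, ∀ s ∈ Set.Icc (0 : ℝ) δ, ∀ t ∈ Set.Icc (0 : ℝ) δ, ∀ y,
        |fNL p θ η γ lam a s (u s) y - fNL p θ η γ lam a t (u t) y| ≤ C * |s - t| ^ α) := by
  obtain ⟨Cη, hCη⟩ := hηb
  obtain ⟨Cγ, hCγ⟩ := hγb
  obtain ⟨Cl, hCl⟩ := hlamb
  obtain ⟨Ca, hCa⟩ := hab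
  obtain ⟨K, hK, hfK⟩ := exists_abs_fNL_sub_fNL_le hp hθ hκ₀ hR.le hδ0.le
    ((le_div_iff₀' hR).1 hδ)
    (fun y => (hCη y).trans ((le_max_left Cη Cγ).trans (le_max_left _ (max Cl Ca))))
    (fun y => (hCγ y).trans ((le_max_right Cη Cγ).trans (le_max_left _ _)))
    (fun y => (hCl y).trans ((le_max_left Cl Ca).trans (le_max_right _ _)))
    (fun y => (hCa y).trans ((le_max_right Cl Ca).trans (le_max_right _ _))) hηκ hγ0
  have hf := fun s hs t ht y => hfK s hs t ht (u s) (u t) y (hub s hs y) (hub t ht y)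
  exact ⟨uniform_continuity_of_le_mul_add hK hf huY,
    fun α _ hα ⟨_, hu⟩ => ⟨_, holder_of_le_mul_add hK hα.le hf hu⟩⟩

/-- Lemma 3.7: for `R > 0`, `δ ∈ (0, κ₀/R]` and a continuous curve
`u : [0,δ] → Y` (continuity in the supremum norm) with `‖u(t)‖ ≤ R t²`, the map
`t ↦ f(t,u(t))` is continuous from `[0,δ]` into `Y`; if moreover `u` is `α`-Hölder
continuous for some `α ∈ (0,1)`, then so is `t ↦ f(t,u(t))`. -/
theorem nonlinearity_continuous_along_curves
    (d : ℕ) (hd : 1 ≤ d) (p θ κ₀ : ℝ) (hp : 1 < p) (hθ : 0 ≤ θ) (hκ₀ : 0 < κ₀)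
    (η γ lam a : Euc d → ℝ)
    (hηc : Continuous η) (hγc : Continuous γ) (hlamc : Continuous lam) (hac : Continuous a)
    (hηb : ∃ C, ∀ y, |η y| ≤ C) (hγb : ∃ C, ∀ y, |γ y| ≤ C)
    (hlamb : ∃ C, ∀ y, |lam y| ≤ C) (hab : ∃ C, ∀ y, |a y| ≤ C)
    (hηκ : ∀ y, κ₀ ≤ η y) (hγ0 : ∀ y, 0 ≤ γ y) (hlam0 : ∀ y, 0 ≤ lam y)
    (R δ : ℝ) (hR : 0 < R) (hδ0 : 0 < δ) (hδ : δ ≤ κ₀ / R)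
    (u : ℝ → Euc d → ℝ)
    (huc : ∀ t ∈ Set.Icc (0 : ℝ) δ, Continuous (u t))
    (huY : ∀ t₀ ∈ Set.Icc (0 : ℝ) δ, ∀ ε > (0 : ℝ), ∃ ρ > (0 : ℝ),
      ∀ t ∈ Set.Icc (0 : ℝ) δ, |t - t₀| ≤ ρ → ∀ y, |u t y - u t₀ y| ≤ ε)
    (hub : ∀ t ∈ Set.Icc (0 : ℝ) δ, ∀ y, |u t y| ≤ R * t ^ 2) :
    (∀ t₀ ∈ Set.Icc (0 : ℝ) δ, ∀ ε > (0 : ℝ), ∃ ρ > (0 : ℝ),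
      ∀ t ∈ Set.Icc (0 : ℝ) δ, |t - t₀| ≤ ρ → ∀ y,
        |fNL p θ η γ lam a t (u t) y - fNL p θ η γ lam a t₀ (u t₀) y| ≤ ε) ∧
    (∀ α : ℝ, 0 < α → α < 1 →
      (∃ C, ∀ s ∈ Set.Icc (0 : ℝ) δ, ∀ t ∈ Set.Icc (0 : ℝ) δ, ∀ y,
        |u s y - u t y| ≤ C * |s - t| ^ α) →
      ∃ C, ∀ s ∈ Set.Icc (0 : ℝ) δ, ∀ t ∈ Set.Icc (0 : ℝ) δ, ∀ y,
        |fNL p θ η γ lam a s (u s) y - fNL p θ η γ lam a t (u t) y| ≤ C * |s - t| ^ α) :=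
  nonlinearity_continuous_along_curves_general d p θ κ₀ hp hθ hκ₀ η γ lam a hηb hγb hlamb hab hηκ
    hγ0 R δ hR hδ0 hδ u huY hub
end
end
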